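/- arXiv:1405.1235 — 8 statements merged into one kernel-verified Lean document; each statement's English description precedes it below -/
import Mathlib

section
/- Let x_0,…,x_{n-1}, y_0,…,y_{n-1} be n×n complex matrices and α_0,…,α_{n-1} positive real numbers. Then ∑_{0≤i<j≤n-1} |√(α_i/α_j) x_i − √(α_j/α_i) x_j|² + ∑_{0≤i<j≤n-1} |√(α_i/α_j) y_i − √(α_j/α_i) y_j|² = ∑_{i,j=0}^{n-1} |√(α_i/α_j) x_i − √(α_j/α_i) y_j|² − |∑_{i=0}^{n-1} (x_i − y_i)|². -/
/-!
With `c i j = √(α i / α j)` one has `c i j * c j i = 1`, so every square expands as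
`|c i j • a - c j i • b|² = (c i j ^ 2 • |a|² - a* b) + (c j i ^ 2 • |b|² - b* a)`.
Over all pairs the cross terms sum to `(∑ x)* (∑ y) + (∑ y)* (∑ x)`. Over the pairs `i < j` the
two halves of each summand fill up the off-diagonal pairs, and the missing diagonal terms
`c i i ^ 2 • |x i|² - |x i|²` vanish. Both sides thus reduce to the same weighted diagonal sums
and the same products of the sums `∑ x`, `∑ y`.
-/

open Matrix
open scoped NNReal ComplexOrder

lemma hermSmul {n : ℕ} (r : ℝ) {A : Matrix (Fin n) (Fin n) ℂ} (h : A.IsHermitian) :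
    (r • A).IsHermitian := by
  unfold Matrix.IsHermitian at *
  rw [Matrix.conjTranspose_smul, h, star_trivial]

lemma hermSum {n m : ℕ} (A : Fin m → Matrix (Fin n) (Fin n) ℂ)
    (h : ∀ j, (A j).IsHermitian) : (∑ j, A j).IsHermitian := by
  unfold Matrix.IsHermitian at *
  rw [Matrix.conjTranspose_sum]
  exact Finset.sum_congr rfl fun j _ => h j

/-- `traceRpow p a ha = trace (a ^ p)` for a Hermitian matrix `a`, computed by
functional calculus: the sum of the `p`-th powers of the eigenvalues of `a`. -/
noncomputable def traceRpow {n : ℕ} (p : ℝ) (a : Matrix (Fin n) (Fin n) ℂ)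
    (ha : a.IsHermitian) : ℝ := ∑ i, (ha.eigenvalues i) ^ p

/-- `schatten p x = trace ((xᴴ * x) ^ (p / 2)) = trace (|x| ^ p) = ‖x‖_p ^ p`,
the `p`-th power of the Schatten `p`-(quasi-)norm. -/
noncomputable def schatten {m : ℕ} (p : ℝ) (x : Matrix (Fin m) (Fin m) ℂ) : ℝ :=
  traceRpow (p / 2) (xᴴ * x) (Matrix.isHermitian_conjTranspose_mul_self x)

/-- `traceF f a ha = trace (f a)` for a Hermitian matrix `a`, where `f : ℝ≥0 → ℝ≥0` is
applied to the eigenvalues of `a` via functional calculus. -/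
noncomputable def traceF {n : ℕ} (f : ℝ≥0 → ℝ≥0) (a : Matrix (Fin n) (Fin n) ℂ)
    (ha : a.IsHermitian) : ℝ := ∑ i, (f (ha.eigenvalues i).toNNReal : ℝ)

namespace Finset

variable {ι M : Type*} [Fintype ι] [LinearOrder ι] [LocallyFiniteOrderTop ι]
  [LocallyFiniteOrderBot ι] [AddCommGroup M]

lemma sum_sum_Ioi_add_swap (g : ι → ι → M) :
    ∑ i, ∑ j ∈ Ioi i, (g i j + g j i) = ∑ i, ∑ j, g i j - ∑ i, g i i := by
  rw [sum_sum_Ioi_add_eq_sum_sum_off_diag (fun i j => g j i), eq_sub_iff_add_eq,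
    ← sum_add_distrib]
  exact sum_congr rfl fun i _ => by simpa using sum_compl_add_sum {i} (g i)

end Finset

open Finset

section WeightedParallelogram

variable {A : Type*} [Ring A] [StarRing A] [Algebra ℝ A] [StarModule ℝ A]

lemma star_smul_sub_smul_mul_self_of_mul_eq_one {c d : ℝ} (hcd : c * d = 1) (a b : A) :
    star (c • a - d • b) * (c • a - d • b)
      = ((c * c) • (star a * a) - star a * b) + ((d * d) • (star b * b) - star b * a) := by
  simp only [star_sub, star_smul, star_trivial, sub_mul, mul_sub, smul_mul_assoc,
    mul_smul_comm, smul_sub, smul_smul, mul_comm d c, hcd, one_smul]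
  abel

variable {ι : Type*} [Fintype ι] (c : ι → ι → ℝ) (hc : ∀ i j, c i j * c j i = 1)
include hc

lemma sum_sum_star_smul_sub_smul_mul_self (z w : ι → A) :
    ∑ i, ∑ j, star (c i j • z i - c j i • w j) * (c i j • z i - c j i • w j)
      = ∑ i, ∑ j, (c i j * c i j) • (star (z i) * z i)
        + ∑ i, ∑ j, (c i j * c i j) • (star (w i) * w i)
        - (star (∑ i, z i) * ∑ i, w i + star (∑ i, w i) * ∑ i, z i) := by
  simp only [star_smul_sub_smul_mul_self_of_mul_eq_one (hc _ _), sum_add_distrib,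
    sum_sub_distrib, star_sum, sum_mul_sum]
  rw [sum_comm (f := fun i j => (c j i * c j i) • (star (w j) * w j)),
    sum_comm (f := fun i j => star (w j) * z i)]
  abel

variable [LinearOrder ι] [LocallyFiniteOrderTop ι] [LocallyFiniteOrderBot ι]

lemma sum_sum_Ioi_star_smul_sub_smul_mul_self (z : ι → A) :
    ∑ i, ∑ j ∈ Ioi i, star (c i j • z i - c j i • z j) * (c i j • z i - c j i • z j)
      = ∑ i, ∑ j, (c i j * c i j) • (star (z i) * z i) - star (∑ i, z i) * ∑ i, z i := by
  simp only [star_smul_sub_smul_mul_self_of_mul_eq_one (hc _ _), sum_sum_Ioi_add_swap, hc,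
    one_smul, sub_self, sum_const_zero, sub_zero, sum_sub_distrib, star_sum, sum_mul_sum]

theorem weighted_parallelogram_law (x y : ι → A) :
    ∑ i, ∑ j ∈ Ioi i, star (c i j • x i - c j i • x j) * (c i j • x i - c j i • x j) +
        ∑ i, ∑ j ∈ Ioi i, star (c i j • y i - c j i • y j) * (c i j • y i - c j i • y j)
      = ∑ i, ∑ j, star (c i j • x i - c j i • y j) * (c i j • x i - c j i • y j)
        - star (∑ i, (x i - y i)) * ∑ i, (x i - y i) := by
  rw [sum_sum_Ioi_star_smul_sub_smul_mul_self c hc, sum_sum_Ioi_star_smul_sub_smul_mul_self c hc,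
    sum_sum_star_smul_sub_smul_mul_self c hc, sum_sub_distrib, star_sub, sub_mul, mul_sub, mul_sub]
  abel

end WeightedParallelogram

lemma Real.sqrt_div_mul_sqrt_div {a b : ℝ} (ha : 0 < a) (hb : 0 < b) :
    √(a / b) * √(b / a) = 1 := by
  rw [← Real.sqrt_mul (div_pos ha hb).le, div_mul_div_comm, mul_comm b,
    div_self (mul_pos ha hb).ne', Real.sqrt_one]

/-- The generalized parallelogram identity (4.1) for matrices, `|x|² = xᴴ x`. -/
theorem general_parallelogram_identity (n : ℕ)
    (x y : Fin n → Matrix (Fin n) (Fin n) ℂ) (α : Fin n → ℝ) (hα : ∀ j, 0 < α j) :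
    (∑ i : Fin n, ∑ j ∈ Finset.Ioi i,
        ((Real.sqrt (α i / α j) : ℂ) • x i - (Real.sqrt (α j / α i) : ℂ) • x j)ᴴ *
          ((Real.sqrt (α i / α j) : ℂ) • x i - (Real.sqrt (α j / α i) : ℂ) • x j))
      + (∑ i : Fin n, ∑ j ∈ Finset.Ioi i,
        ((Real.sqrt (α i / α j) : ℂ) • y i - (Real.sqrt (α j / α i) : ℂ) • y j)ᴴ *
          ((Real.sqrt (α i / α j) : ℂ) • y i - (Real.sqrt (α j / α i) : ℂ) • y j))
      = (∑ i : Fin n, ∑ j : Fin n,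
        ((Real.sqrt (α i / α j) : ℂ) • x i - (Real.sqrt (α j / α i) : ℂ) • y j)ᴴ *
          ((Real.sqrt (α i / α j) : ℂ) • x i - (Real.sqrt (α j / α i) : ℂ) • y j))
        - (∑ i, (x i - y i))ᴴ * (∑ i, (x i - y i)) := by
  simp only [Complex.coe_smul, ← star_eq_conjTranspose]
  exact weighted_parallelogram_law (fun i j => √(α i / α j))
    (fun i j => Real.sqrt_div_mul_sqrt_div (hα i) (hα j)) x y
end

section
/- Let x and y be positive semidefinite n×n complex matrices, let f : ℝ≥0 → ℝ≥0 be a continuous increasing convex function with f(0) = 0, and let α ∈ (0,1). Then trace(f(α x + (1−α) y)) ≤ α trace(f(x)) + (1−α) trace(f(y)), where f is applied via the functional calculus (applying f to each eigenvalue). -/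
/-!
Diagonalize `z = α x + (1 - α) y` by a unitary `U`. The eigenvalues of `z` are then
`α (U* x U)ᵢᵢ + (1 - α) (U* y U)ᵢᵢ`, so convexity of `f` on each eigenvalue bounds `tr f(z)` by
`α ∑ᵢ f((U* x U)ᵢᵢ) + (1 - α) ∑ᵢ f((U* y U)ᵢᵢ)`. Peierls' inequality finishes the proof: the
diagonal of a Hermitian matrix `A` in any orthonormal basis is its eigenvalue vector multiplied by
the doubly stochastic matrix `(|Wᵢⱼ|²)` of a unitary change of basis, so by Jensen
`∑ᵢ f((U* A U)ᵢᵢ) ≤ ∑ᵢ f(λᵢ(A))`.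
-/
open Matrix
open scoped NNReal ComplexOrder

section

variable {𝕜 β ι : Type*} [Field 𝕜] [LinearOrder 𝕜] [IsStrictOrderedRing 𝕜]
  [AddCommGroup β] [PartialOrder β] [IsOrderedAddMonoid β] [Module 𝕜 β] [IsStrictOrderedModule 𝕜 β]
  [Fintype ι] [DecidableEq ι]

theorem ConvexOn.sum_map_mulVec_le_of_mem_doublyStochastic {s : Set 𝕜} {g : 𝕜 → β}
    (hg : ConvexOn 𝕜 s g) {P : Matrix ι ι 𝕜} (hP : P ∈ doublyStochastic 𝕜 ι) {v : ι → 𝕜}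
    (hv : ∀ j, v j ∈ s) : ∑ i, g ((P *ᵥ v) i) ≤ ∑ j, g (v j) :=
  calc ∑ i, g ((P *ᵥ v) i) = ∑ i, g (∑ j, P i j • v j) := by simp [mulVec, dotProduct]
    _ ≤ ∑ i, ∑ j, P i j • g (v j) := Finset.sum_le_sum fun i _ =>
        hg.map_sum_le (fun _ _ => nonneg_of_mem_doublyStochastic hP)
          (sum_row_of_mem_doublyStochastic hP i) fun j _ => hv j
    _ = ∑ j, g (v j) := by
        rw [Finset.sum_comm]
        simp only [← Finset.sum_smul, sum_col_of_mem_doublyStochastic hP, one_smul]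

end

section

variable {𝕜 n : Type*} [RCLike 𝕜] [Fintype n]

theorem Matrix.PosSemidef.re_star_mul_mul_apply_self_nonneg {A : Matrix n n 𝕜}
    (hA : A.PosSemidef) (U : Matrix n n 𝕜) (i : n) : 0 ≤ RCLike.re ((star U * A * U) i i) :=
  (RCLike.nonneg_iff.1 (hA.conjTranspose_mul_mul_same U).diag_nonneg).1

variable [DecidableEq n]

theorem Matrix.map_norm_sq_mem_doublyStochastic {U : Matrix n n 𝕜}
    (hU : U ∈ unitaryGroup n 𝕜) : U.map (fun z => ‖z‖ ^ 2) ∈ doublyStochastic ℝ n := by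
  refine mem_doublyStochastic_iff_sum.2 ⟨fun _ _ => by simp only [map_apply]; positivity,
    fun i => ?_, fun j => ?_⟩
  · have h := congr_fun₂ (mem_unitaryGroup_iff.1 hU) i i
    simp only [mul_apply, star_apply, one_apply_eq, RCLike.star_def, RCLike.mul_conj] at h
    exact_mod_cast h
  · have h := congr_fun₂ (mem_unitaryGroup_iff'.1 hU) j j
    simp only [mul_apply, star_apply, one_apply_eq, RCLike.star_def, RCLike.conj_mul] at h
    exact_mod_cast h

theorem Matrix.re_star_mul_diagonal_mul_apply_self (W : Matrix n n 𝕜) (d : n → ℝ) (i : n) :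
    RCLike.re ((star W * diagonal (RCLike.ofReal ∘ d) * W : Matrix n n 𝕜) i i) =
      ((W.map (fun z => ‖z‖ ^ 2))ᵀ *ᵥ d) i := by
  rw [mul_apply, map_sum]
  simp only [mul_diagonal, star_apply, RCLike.star_def, Function.comp_apply, mulVec, dotProduct,
    transpose_apply, map_apply]
  refine Finset.sum_congr rfl fun j _ => ?_
  rw [mul_right_comm, RCLike.conj_mul]
  norm_cast

namespace Matrix.IsHermitian

variable {A : Matrix n n 𝕜} (hA : A.IsHermitian)
include hA

theorem re_star_mul_mul_eigenvectorUnitary_apply_self (i : n) :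
    RCLike.re ((star (hA.eigenvectorUnitary : Matrix n n 𝕜) * A * hA.eigenvectorUnitary) i i) =
      hA.eigenvalues i := by
  have h := congr_fun₂ hA.conjStarAlgAut_star_eigenvectorUnitary i i
  rw [Unitary.conjStarAlgAut_star_apply] at h
  simp [h]

theorem sum_convexOn_re_star_mul_mul_apply_self_le {U : Matrix n n 𝕜}
    (hU : U ∈ unitaryGroup n 𝕜) {s : Set ℝ} {g : ℝ → ℝ} (hg : ConvexOn ℝ s g)
    (hs : ∀ i, hA.eigenvalues i ∈ s) :
    ∑ i, g (RCLike.re ((star U * A * U) i i)) ≤ ∑ i, g (hA.eigenvalues i) := by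
  set W : Matrix n n 𝕜 := star (hA.eigenvectorUnitary : Matrix n n 𝕜) * U
  have hW : W ∈ unitaryGroup n 𝕜 := mul_mem (Unitary.star_mem hA.eigenvectorUnitary.2) hU
  have hconj : star U * A * U = star W * diagonal (RCLike.ofReal ∘ hA.eigenvalues) * W := by
    conv_lhs => rw [hA.spectral_theorem, Unitary.conjStarAlgAut_apply]
    simp only [W, star_mul, star_star, Matrix.mul_assoc]
  simp only [hconj, re_star_mul_diagonal_mul_apply_self]
  exact hg.sum_map_mulVec_le_of_mem_doublyStochastic
    (transpose_mem_doublyStochastic_iff.2 (map_norm_sq_mem_doublyStochastic hW)) hs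

end Matrix.IsHermitian

end

theorem ConvexOn.coe_comp_toNNReal {f : ℝ≥0 → ℝ≥0} (hf : ConvexOn ℝ≥0 Set.univ f) :
    ConvexOn ℝ (Set.Ici 0) fun t : ℝ => (f t.toNNReal : ℝ) := by
  refine ⟨convex_Ici 0, fun s hs t ht a b ha hb hab => ?_⟩
  have hab' : a.toNNReal + b.toNNReal = 1 := by
    rw [← Real.toNNReal_add ha hb, hab, Real.toNNReal_one]
  have key := hf.2 (Set.mem_univ s.toNNReal) (Set.mem_univ t.toNNReal) zero_le zero_le hab'
  have hcomb : (a • s + b • t).toNNReal = a.toNNReal • s.toNNReal + b.toNNReal • t.toNNReal := by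
    rw [smul_eq_mul, smul_eq_mul, Real.toNNReal_add (mul_nonneg ha hs) (mul_nonneg hb ht),
      Real.toNNReal_mul ha, Real.toNNReal_mul hb]
    rfl
  simp only [hcomb]
  calc (f (a.toNNReal • s.toNNReal + b.toNNReal • t.toNNReal) : ℝ)
      ≤ ((a.toNNReal • f s.toNNReal + b.toNNReal • f t.toNNReal : ℝ≥0) : ℝ) := by
        exact_mod_cast key
    _ = a • (f s.toNNReal : ℝ) + b • (f t.toNNReal : ℝ) := by
        simp [Real.coe_toNNReal a ha, Real.coe_toNNReal b hb]

theorem trace_convexity_general {n : ℕ} (x y : Matrix (Fin n) (Fin n) ℂ)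
    (hx : x.PosSemidef) (hy : y.PosSemidef) (f : ℝ≥0 → ℝ≥0)
    (hconv : ConvexOn ℝ≥0 Set.univ f)
    (α : ℝ) (hα : α ∈ Set.Ioo (0 : ℝ) 1) :
    traceF f (α • x + (1 - α) • y) ((hermSmul α hx.1).add (hermSmul (1 - α) hy.1))
      ≤ α * traceF f x hx.1 + (1 - α) * traceF f y hy.1 := by
  set hC := (hermSmul α hx.1).add (hermSmul (1 - α) hy.1)
  set U : Matrix (Fin n) (Fin n) ℂ := ↑hC.eigenvectorUnitary
  have hU : U ∈ unitaryGroup (Fin n) ℂ := hC.eigenvectorUnitary.2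
  set g : ℝ → ℝ := fun t => (f t.toNNReal : ℝ)
  have hg : ConvexOn ℝ (Set.Ici 0) g := hconv.coe_comp_toNNReal
  set dx : Fin n → ℝ := fun i => RCLike.re ((star U * x * U) i i)
  set dy : Fin n → ℝ := fun i => RCLike.re ((star U * y * U) i i)
  have hsplit (i : Fin n) : hC.eigenvalues i = α * dx i + (1 - α) * dy i := by
    rw [← hC.re_star_mul_mul_eigenvectorUnitary_apply_self]
    simp [dx, dy, U, Matrix.mul_add, Matrix.add_mul]
  have hα₀ : 0 ≤ α := hα.1.le
  have hα₁ : 0 ≤ 1 - α := sub_nonneg.2 hα.2.le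
  calc traceF f (α • x + (1 - α) • y) hC = ∑ i, g (hC.eigenvalues i) := rfl
    _ ≤ ∑ i, (α * g (dx i) + (1 - α) * g (dy i)) := Finset.sum_le_sum fun i _ => by
        rw [hsplit]
        exact hg.2 (hx.re_star_mul_mul_apply_self_nonneg U i)
          (hy.re_star_mul_mul_apply_self_nonneg U i) hα₀ hα₁ (add_sub_cancel α 1)
    _ = α * ∑ i, g (dx i) + (1 - α) * ∑ i, g (dy i) := by
        rw [Finset.sum_add_distrib, Finset.mul_sum, Finset.mul_sum]
    _ ≤ α * traceF f x hx.1 + (1 - α) * traceF f y hy.1 := by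
        gcongr
        · exact hx.1.sum_convexOn_re_star_mul_mul_apply_self_le hU hg hx.eigenvalues_nonneg
        · exact hy.1.sum_convexOn_re_star_mul_mul_apply_self_le hU hg hy.eigenvalues_nonneg

/-- Trace convexity: for positive semidefinite `x, y`, a continuous increasing convex
`f : ℝ≥0 → ℝ≥0` with `f 0 = 0`, and `α ∈ (0,1)`,
`trace f(αx + (1-α)y) ≤ α trace f(x) + (1-α) trace f(y)`. -/
theorem trace_convexity {n : ℕ} (x y : Matrix (Fin n) (Fin n) ℂ)
    (hx : x.PosSemidef) (hy : y.PosSemidef) (f : ℝ≥0 → ℝ≥0)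
    (hcont : Continuous f) (hmono : Monotone f) (hconv : ConvexOn ℝ≥0 Set.univ f)
    (hf0 : f 0 = 0) (α : ℝ) (hα : α ∈ Set.Ioo (0 : ℝ) 1) :
    traceF f (α • x + (1 - α) • y) ((hermSmul α hx.1).add (hermSmul (1 - α) hy.1))
      ≤ α * traceF f x hx.1 + (1 - α) * traceF f y hy.1 :=
  trace_convexity_general x y hx hy f hconv α hα
end

section
/- Let x and y be positive semidefinite n×n complex matrices and let f : ℝ≥0 → ℝ≥0 be a continuous increasing concave function with f(0) = 0. Then trace(f(x + y)) ≤ trace(f(x)) + trace(f(y)), where f is applied via the functional calculus. -/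
open Matrix
open scoped NNReal ComplexOrder

open Set

inductive IsHingeComb : (ℝ → ℝ) → Prop
  | linear (β : ℝ) : IsHingeComb fun t => β * t
  | sub_hinge {G : ℝ → ℝ} {w s : ℝ} (hw : 0 ≤ w) (hs : 0 ≤ s) (hG : IsHingeComb G) :
      IsHingeComb fun t => G t - w * (t - s)⁺

namespace IsHingeComb

lemma apply_zero {G : ℝ → ℝ} (hG : IsHingeComb G) : G 0 = 0 := by
  induction hG with
  | linear β => simp
  | sub_hinge hw hs _ ih => simp [ih, hs]

lemma sum_le_sum_of_sum_posPart_le {G : ℝ → ℝ} (hG : IsHingeComb G) {ι κ : Type*}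
    [Fintype ι] [Fintype κ] {a : ι → ℝ} {c : κ → ℝ} (hsum : ∑ k, c k = ∑ i, a i)
    (hmaj : ∀ s, 0 ≤ s → ∑ i, (a i - s)⁺ ≤ ∑ k, (c k - s)⁺) :
    ∑ k, G (c k) ≤ ∑ i, G (a i) := by
  induction hG with
  | linear β => simp [← Finset.mul_sum, hsum]
  | @sub_hinge G w s hw hs _ ih =>
    simp only [Finset.sum_sub_distrib, ← Finset.mul_sum]
    linarith [mul_le_mul_of_nonneg_left (hmaj s hs) hw]

end IsHingeComb

/-- The invariant maintained while the points of `T` are added in increasing order to the set `S`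
on which `G` interpolates `F`; `p` is the last point added, or `0`. -/
structure HingeInterpolant (F : ℝ → ℝ) (T S : Finset ℝ) (G : ℝ → ℝ) (σ p : ℝ) : Prop where
  isHingeComb : IsHingeComb G
  nonneg : 0 ≤ p
  eq_zero_or_mem : p = 0 ∨ p ∈ S
  le : ∀ t ∈ S, t ≤ p
  eqOn : ∀ t ∈ S, G t = F t
  apply_eq : G p = F p
  affine : ∀ t, p ≤ t → G t = G p + σ * (t - p)
  slope_le : ∀ t ∈ T, p < t → F t ≤ F p + σ * (t - p)

namespace HingeInterpolant

variable {F G : ℝ → ℝ} {T S : Finset ℝ} {σ p : ℝ}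

lemma empty (hF0 : F 0 = 0) {σ₀ : ℝ} (hσ₀ : ∀ t ∈ T, 0 < t → F t ≤ σ₀ * t) :
    HingeInterpolant F T ∅ (fun t => σ₀ * t) σ₀ 0 where
  isHingeComb := .linear σ₀
  nonneg := le_rfl
  eq_zero_or_mem := .inl rfl
  le := by simp
  eqOn := by simp
  apply_eq := by simp [hF0]
  affine t _ := by ring
  slope_le t ht ht0 := by simpa [hF0] using hσ₀ t ht ht0

lemma insert [DecidableEq ℝ] (h : HingeInterpolant F T S G σ p) (hF : ConcaveOn ℝ (Ici 0) F)
    {m : ℝ} (hmT : m ∈ T) (hm : 0 < m) (hlt : ∀ t ∈ S, t < m) :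
    HingeInterpolant F T (insert m S)
      (fun t => G t - (σ - (F m - F p) / (m - p)) * (t - p)⁺) ((F m - F p) / (m - p)) m := by
  have hpm : p < m := by
    rcases h.eq_zero_or_mem with rfl | hpS
    exacts [hm, hlt p hpS]
  set σ' := (F m - F p) / (m - p)
  have hσ' : σ' * (m - p) = F m - F p := div_mul_cancel₀ _ (sub_pos.mpr hpm).ne'
  have hσσ' : σ' ≤ σ := by
    rw [div_le_iff₀ (sub_pos.mpr hpm)]
    linarith [h.slope_le m hmT hpm]
  have hm_eq : G m - (σ - σ') * (m - p)⁺ = F m := by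
    rw [h.affine m hpm.le, posPart_eq_self.mpr (sub_nonneg.mpr hpm.le), h.apply_eq]
    linarith
  refine ⟨.sub_hinge (sub_nonneg.mpr hσσ') h.nonneg h.isHingeComb, hm.le,
    .inr (Finset.mem_insert_self _ _), ?_, ?_, hm_eq, fun t hmt => ?_, fun t ht hmt => ?_⟩
  · simp only [Finset.mem_insert, forall_eq_or_imp]
    exact ⟨le_rfl, fun t ht => (hlt t ht).le⟩
  · simp only [Finset.mem_insert, forall_eq_or_imp]
    refine ⟨hm_eq, fun t ht => ?_⟩
    simp [posPart_eq_zero.mpr (sub_nonpos.mpr (h.le t ht)), h.eqOn t ht]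
  · simp only [h.affine t (hpm.le.trans hmt), h.affine m hpm.le,
      posPart_eq_self.mpr (sub_nonneg.mpr (hpm.le.trans hmt)),
      posPart_eq_self.mpr (sub_nonneg.mpr hpm.le)]
    ring
  · have := hF.slope_anti_adjacent (mem_Ici.mpr h.nonneg) (mem_Ici.mpr (hm.trans hmt).le) hpm hmt
    rw [div_le_iff₀ (sub_pos.mpr hmt)] at this
    linarith

end HingeInterpolant

section Concave

variable {F : ℝ → ℝ}

lemma ConcaveOn.exists_isHingeComb_eqOn (hF : ConcaveOn ℝ (Ici 0) F) (hF0 : F 0 = 0)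
    (S : Finset ℝ) (hS : ∀ t ∈ S, 0 ≤ t) : ∃ G, IsHingeComb G ∧ EqOn G F S := by
  classical
  set T := S.filter (0 < ·)
  obtain ⟨σ₀, hσ₀⟩ := (T.image fun t => F t / t).bddAbove
  have hF_le : ∀ t ∈ T, 0 < t → F t ≤ σ₀ * t := fun t ht ht0 =>
    (div_le_iff₀ ht0).mp (hσ₀ (Finset.mem_image_of_mem _ ht))
  have hinterp : ∀ S' ⊆ T, ∃ G σ p, HingeInterpolant F T S' G σ p := by
    intro S'
    induction S' using Finset.induction_on_max with
    | empty => exact fun _ => ⟨_, _, _, .empty hF0 hF_le⟩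
    | insert m S' hlt ih =>
      intro hsub
      obtain ⟨G, σ, p, h⟩ := ih ((Finset.subset_insert _ _).trans hsub)
      have hmT := hsub (Finset.mem_insert_self m S')
      exact ⟨_, _, _, h.insert hF hmT (Finset.mem_filter.mp hmT).2 hlt⟩
  obtain ⟨G, _, _, h⟩ := hinterp T subset_rfl
  refine ⟨G, h.isHingeComb, fun t ht => ?_⟩
  rcases (hS t ht).eq_or_lt with rfl | ht0
  · rw [h.isHingeComb.apply_zero, hF0]
  · exact h.eqOn t (Finset.mem_filter.mpr ⟨ht, ht0⟩)

theorem ConcaveOn.sum_le_sum_of_sum_posPart_le (hF : ConcaveOn ℝ (Ici 0) F) (hF0 : F 0 = 0)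
    {ι κ : Type*} [Fintype ι] [Fintype κ] {a : ι → ℝ} {c : κ → ℝ} (ha : ∀ i, 0 ≤ a i)
    (hc : ∀ k, 0 ≤ c k) (hsum : ∑ k, c k = ∑ i, a i)
    (hmaj : ∀ s, 0 ≤ s → ∑ i, (a i - s)⁺ ≤ ∑ k, (c k - s)⁺) :
    ∑ k, F (c k) ≤ ∑ i, F (a i) := by
  classical
  obtain ⟨G, hG, hGF⟩ := hF.exists_isHingeComb_eqOn hF0 (Finset.univ.image a ∪ Finset.univ.image c)
    (by simp [or_imp, forall_and, ha, hc])
  have hGa : ∀ i, G (a i) = F (a i) := fun i => hGF (by simp)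
  have hGc : ∀ k, G (c k) = F (c k) := fun k => hGF (by simp)
  simpa [hGa, hGc] using hG.sum_le_sum_of_sum_posPart_le hsum hmaj

end Concave

lemma NNReal.concaveOn_coe_comp_toNNReal {f : ℝ≥0 → ℝ≥0} (hf : ConcaveOn ℝ≥0 univ f) :
    ConcaveOn ℝ (Ici 0) fun t : ℝ => (f t.toNNReal : ℝ) := by
  refine ⟨convex_Ici 0, fun x hx y hy a b ha hb hab => ?_⟩
  lift x to ℝ≥0 using hx
  lift y to ℝ≥0 using hy
  lift a to ℝ≥0 using ha
  lift b to ℝ≥0 using hb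
  have := hf.2 (mem_univ x) (mem_univ y) a.2 b.2 (by exact_mod_cast hab)
  simpa [← NNReal.coe_mul, ← NNReal.coe_add] using NNReal.coe_le_coe.mpr this

namespace Matrix

open scoped MatrixOrder

lemma rank_add_le {m n 𝕜 : Type*} [Field 𝕜] [Fintype n] (A B : Matrix m n 𝕜) :
    (A + B).rank ≤ A.rank + B.rank := by
  have h := LinearMap.rank_add_le A.mulVecLin B.mulVecLin
  rw [← mulVecLin_add] at h
  simp only [LinearMap.rank, ← Module.finrank_eq_rank] at h
  exact_mod_cast h

variable {n 𝕜 : Type*} [RCLike 𝕜] [Fintype n] [DecidableEq n]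

/-- The spectrum of a matrix is finite, so this discharges the continuity side conditions of the
`cfc` lemmas for arbitrary functions. -/
@[fun_prop]
lemma continuousOn_spectrum (f : ℝ → ℝ) (A : Matrix n n 𝕜) : ContinuousOn f (spectrum ℝ A) :=
  (Set.toFinite _).continuousOn f

lemma IsHermitian.trace_cfc {A : Matrix n n 𝕜} (hA : A.IsHermitian) (f : ℝ → ℝ) :
    (cfc f A).trace = ∑ i, (f (hA.eigenvalues i) : 𝕜) := by
  rw [hA.cfc_eq, IsHermitian.cfc, Unitary.conjStarAlgAut_apply, trace_mul_cycle,
    Unitary.coe_star_mul_self, one_mul, trace_diagonal]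
  rfl

lemma IsHermitian.sum_eigenvalues_add {A B : Matrix n n 𝕜} (hA : A.IsHermitian)
    (hB : B.IsHermitian) :
    ∑ i, (hA.add hB).eigenvalues i = ∑ i, hA.eigenvalues i + ∑ i, hB.eigenvalues i := by
  have h := trace_add A B
  rw [(hA.add hB).trace_eq_sum_eigenvalues, hA.trace_eq_sum_eigenvalues,
    hB.trace_eq_sum_eigenvalues] at h
  exact_mod_cast h

lemma isStarProjection_cfc {A : Matrix n n 𝕜} {f : ℝ → ℝ} (hf : ∀ t, f t = 0 ∨ f t = 1) :
    IsStarProjection (cfc f A) := by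
  refine ⟨?_, cfc_predicate f A⟩
  rw [IsIdempotentElem, ← cfc_mul]
  refine cfc_congr fun t _ => ?_
  rcases hf t with h | h <;> simp [h]

lemma IsStarProjection.trace_eq_rank {E : Matrix n n 𝕜} (hE : IsStarProjection E) :
    E.trace = E.rank := by
  have hH : E.IsHermitian := hE.isSelfAdjoint
  have h01 : ∀ i, hH.eigenvalues i = 0 ∨ hH.eigenvalues i = 1 := fun i =>
    (isIdempotentElem_iff_spectrum_subset ℝ E hE.isSelfAdjoint).mp hE.isIdempotentElem
      (hH.eigenvalues_mem_spectrum_real i)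
  rw [hH.trace_eq_sum_eigenvalues, hH.rank_eq_card_non_zero_eigs, Fintype.card_subtype,
    ← Finset.sum_boole]
  refine Finset.sum_congr rfl fun i _ => ?_
  rcases h01 i with h | h <;> simp [h]

lemma IsStarProjection.mul_eq_zero_of_le {P T F : Matrix n n 𝕜} (hP : IsStarProjection P)
    (hPT : P ≤ T) (hTF : T * F = 0) : P * F = 0 := by
  have hle : star F * P * F ≤ 0 := by
    simpa [mul_assoc, hTF] using star_left_conjugate_le_conjugate hPT F
  have hge : 0 ≤ star F * P * F := star_left_conjugate_nonneg hP.nonneg F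
  have h0 : (P * F)ᴴ * (P * F) = star F * P * F := by
    rw [conjTranspose_mul, ← star_eq_conjTranspose, ← star_eq_conjTranspose,
      hP.isSelfAdjoint.star_eq, mul_assoc, ← mul_assoc P, hP.isIdempotentElem.eq, mul_assoc]
  rw [← conjTranspose_mul_self_eq_zero, h0]
  exact le_antisymm hle hge

lemma IsStarProjection.exists_le_rank_le {P Q : Matrix n n 𝕜} (hP : IsStarProjection P)
    (hQ : IsStarProjection Q) :
    ∃ R : Matrix n n 𝕜, IsStarProjection R ∧ P ≤ R ∧ Q ≤ R ∧ R.rank ≤ P.rank + Q.rank := by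
  -- the support projection of `P + Q`, thanks to `0⁻¹ = 0`
  set R := cfc (fun t : ℝ => t * t⁻¹) (P + Q) with hR_def
  have hR : IsStarProjection R := isStarProjection_cfc fun t => by
    by_cases ht : t = 0 <;> simp [ht]
  have hRT : R = (P + Q) * cfc (fun t : ℝ => t⁻¹) (P + Q) := by
    rw [hR_def, cfc_mul (fun t : ℝ => t) _ (P + Q), cfc_id' ℝ (P + Q)]
  have hTR : (P + Q) * (1 - R) = 0 := by
    have : (P + Q) * R = P + Q := calc
      (P + Q) * R = cfc (fun t : ℝ => t) (P + Q) * cfc (fun t : ℝ => t * t⁻¹) (P + Q) := by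
        rw [cfc_id' ℝ (P + Q)]
      _ = cfc (fun t : ℝ => t * (t * t⁻¹)) (P + Q) := (cfc_mul _ _ _).symm
      _ = cfc (fun t : ℝ => t) (P + Q) := cfc_congr fun t _ => by
        by_cases ht : t = 0 <;> simp [ht]
      _ = P + Q := cfc_id' ℝ (P + Q)
    rw [mul_one_sub, this, sub_self]
  have hle : ∀ {E}, IsStarProjection E → E ≤ P + Q → E ≤ R := fun hE hET =>
    hE.le_of_mul_eq_left hR
      (sub_eq_zero.mp (by rw [← mul_one_sub]; exact hE.mul_eq_zero_of_le hET hTR)).symm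
  refine ⟨R, hR, hle hP (le_add_of_nonneg_right hQ.nonneg),
    hle hQ (le_add_of_nonneg_left hP.nonneg), ?_⟩
  calc R.rank ≤ (P + Q).rank := hRT ▸ rank_mul_le_left _ _
    _ ≤ P.rank + Q.rank := rank_add_le P Q

lemma PosSemidef.trace_mul_nonneg {A B : Matrix n n 𝕜} (hA : A.PosSemidef) (hB : B.PosSemidef) :
    0 ≤ (A * B).trace := by
  rw [← CFC.sqrt_mul_sqrt_self B hB.nonneg, ← mul_assoc, trace_mul_cycle]
  have hS : (CFC.sqrt B)ᴴ = CFC.sqrt B := (CFC.sqrt_nonneg B).isSelfAdjoint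
  simpa [hS] using (hA.conjTranspose_mul_mul_same (CFC.sqrt B)).trace_nonneg

lemma PosSemidef.re_trace_mul_nonneg {A B : Matrix n n 𝕜} (hA : A.PosSemidef)
    (hB : B.PosSemidef) : 0 ≤ RCLike.re (A * B).trace :=
  (RCLike.nonneg_iff.mp (hA.trace_mul_nonneg hB)).1

lemma PosSemidef.re_trace_mul_mono {A B C : Matrix n n 𝕜} (hA : A.PosSemidef) (hBC : B ≤ C) :
    RCLike.re (A * B).trace ≤ RCLike.re (A * C).trace := by
  have := hA.re_trace_mul_nonneg (le_iff.mp hBC)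
  rwa [mul_sub, trace_sub, map_sub, sub_nonneg] at this

lemma IsHermitian.exists_isStarProjection_sum_posPart_eq {A : Matrix n n 𝕜} (hA : A.IsHermitian)
    (s : ℝ) : ∃ P : Matrix n n 𝕜, IsStarProjection P ∧
      ∑ i, (hA.eigenvalues i - s)⁺ = RCLike.re (A * P).trace - s * P.rank := by
  set ind : ℝ → ℝ := fun t => if s < t then 1 else 0
  have hind : ∀ t, ind t = 0 ∨ ind t = 1 := fun t => by
    by_cases h : s < t <;> simp [ind, h]
  have hP := isStarProjection_cfc (A := A) hind
  refine ⟨cfc ind A, hP, ?_⟩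
  have hAP : A * cfc ind A = cfc (fun t => t * ind t) A := by
    rw [cfc_mul (fun t : ℝ => t) ind A, cfc_id' ℝ A]
  have hrank : ((cfc ind A).rank : ℝ) = ∑ i, ind (hA.eigenvalues i) := by
    have h := hP.trace_eq_rank
    rw [hA.trace_cfc] at h
    exact_mod_cast h.symm
  rw [hAP, hA.trace_cfc, hrank, Finset.mul_sum, ← RCLike.ofReal_sum, RCLike.ofReal_re,
    ← Finset.sum_sub_distrib]
  refine Finset.sum_congr rfl fun i _ => ?_
  by_cases h : s < hA.eigenvalues i
  · simp [ind, h, h.le]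
  · simp [ind, h, not_lt.mp h]

lemma IsHermitian.re_trace_mul_sub_le_sum_posPart {A R : Matrix n n 𝕜} (hA : A.IsHermitian)
    (hR : IsStarProjection R) (s : ℝ) :
    RCLike.re (A * R).trace - s * R.rank ≤ ∑ i, (hA.eigenvalues i - s)⁺ := by
  set Hp := cfc (fun t => (t - s)⁺) A
  set Hn := cfc (fun t => (t - s)⁻) A
  have hHp : Hp.PosSemidef := (cfc_nonneg fun t _ => posPart_nonneg _).posSemidef
  have hHn : Hn.PosSemidef := (cfc_nonneg fun t _ => negPart_nonneg _).posSemidef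
  have hsplit : Hp - Hn = A - algebraMap ℝ _ s := calc
    Hp - Hn = cfc (fun t => (t - s)⁺ - (t - s)⁻) A := (cfc_sub _ _ A).symm
    _ = cfc (fun t => t - s) A := cfc_congr fun t _ => posPart_sub_negPart _
    _ = A - algebraMap ℝ _ s := by rw [cfc_sub (fun t : ℝ => t) _ A, cfc_id' ℝ A, cfc_const s A]
  have htrace : RCLike.re (A * R).trace - s * R.rank
      = RCLike.re (Hp * R).trace - RCLike.re (Hn * R).trace := by
    rw [← map_sub, ← trace_sub, ← sub_mul, hsplit, sub_mul, trace_sub, map_sub,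
      Algebra.algebraMap_eq_smul_one, smul_mul_assoc, one_mul, trace_smul, hR.trace_eq_rank,
      RCLike.smul_re, RCLike.natCast_re]
  have hHpR : RCLike.re (Hp * R).trace ≤ RCLike.re Hp.trace := by
    simpa using hHp.re_trace_mul_mono hR.le_one
  have hHp_tr : RCLike.re Hp.trace = ∑ i, (hA.eigenvalues i - s)⁺ := by
    rw [hA.trace_cfc, ← RCLike.ofReal_sum, RCLike.ofReal_re]
  linarith [hHn.re_trace_mul_nonneg hR.nonneg.posSemidef]

lemma PosSemidef.sum_posPart_eigenvalues_add_le {x y : Matrix n n 𝕜} (hx : x.PosSemidef)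
    (hy : y.PosSemidef) {s : ℝ} (hs : 0 ≤ s) :
    ∑ i, (hx.1.eigenvalues i - s)⁺ + ∑ i, (hy.1.eigenvalues i - s)⁺ ≤
      ∑ i, ((hx.1.add hy.1).eigenvalues i - s)⁺ := by
  obtain ⟨P, hP, hxP⟩ := hx.1.exists_isStarProjection_sum_posPart_eq s
  obtain ⟨Q, hQ, hyQ⟩ := hy.1.exists_isStarProjection_sum_posPart_eq s
  obtain ⟨R, hR, hPR, hQR, hrank⟩ := hP.exists_le_rank_le hQ
  have hrank' : s * R.rank ≤ s * (P.rank + Q.rank) :=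
    mul_le_mul_of_nonneg_left (by exact_mod_cast hrank) hs
  have hR_bound := (hx.1.add hy.1).re_trace_mul_sub_le_sum_posPart hR s
  rw [add_mul, trace_add, map_add] at hR_bound
  linarith [hx.re_trace_mul_mono hPR, hy.re_trace_mul_mono hQR]

end Matrix

theorem trace_subadditive_general {n : ℕ} (x y : Matrix (Fin n) (Fin n) ℂ)
    (hx : x.PosSemidef) (hy : y.PosSemidef) (f : ℝ≥0 → ℝ≥0)
    (hconc : ConcaveOn ℝ≥0 Set.univ f)
    (hf0 : f 0 = 0) :
    traceF f (x + y) (hx.1.add hy.1) ≤ traceF f x hx.1 + traceF f y hy.1 := by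
  have key := (NNReal.concaveOn_coe_comp_toNNReal hconc).sum_le_sum_of_sum_posPart_le
    (by simp [hf0]) (a := Sum.elim hx.1.eigenvalues hy.1.eigenvalues)
    (c := (hx.1.add hy.1).eigenvalues)
    (by rintro (i | i) <;> simp [hx.eigenvalues_nonneg, hy.eigenvalues_nonneg])
    (hx.add hy).eigenvalues_nonneg
    (by simpa [Fintype.sum_sum_type] using hx.1.sum_eigenvalues_add hy.1)
    (fun s hs => by simpa [Fintype.sum_sum_type] using hx.sum_posPart_eigenvalues_add_le hy hs)
  simpa [traceF, Fintype.sum_sum_type] using key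

/-- Rotfel'd subadditivity: for positive semidefinite `x, y` and continuous increasing
concave `f : ℝ≥0 → ℝ≥0` with `f 0 = 0`, `trace f(x + y) ≤ trace f(x) + trace f(y)`. -/
theorem trace_subadditive {n : ℕ} (x y : Matrix (Fin n) (Fin n) ℂ)
    (hx : x.PosSemidef) (hy : y.PosSemidef) (f : ℝ≥0 → ℝ≥0)
    (hcont : Continuous f) (hmono : Monotone f) (hconc : ConcaveOn ℝ≥0 Set.univ f)
    (hf0 : f 0 = 0) :
    traceF f (x + y) (hx.1.add hy.1) ≤ traceF f x hx.1 + traceF f y hy.1 :=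
  trace_subadditive_general x y hx hy f hconc hf0
end

section
/- Let x and y be n×n complex matrices and let p ≥ 2 be a real number. Then 2(‖x‖_p^p + ‖y‖_p^p) ≤ ‖x+y‖_p^p + ‖x−y‖_p^p ≤ 2^{p−1}(‖x‖_p^p + ‖y‖_p^p), where ‖x‖_p^p = trace(|x|^p) is the p-th power of the Schatten p-norm. -/
open Matrix
open scoped NNReal ComplexOrder

/-!
Put `r = p / 2 ≥ 1`. Since `|x + y|² + |x - y|² = 2 (|x|² + |y|²)`, the upper inequality follows
from two trace inequalities for positive semidefinite `P`, `Q`: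
`tr P^r + tr Q^r ≤ tr (P + Q)^r ≤ 2^(r-1) (tr P^r + tr Q^r)`.
Both compare diagonal entries in an eigenbasis. If `T = V diag(λ) V*` and `U` is unitary, the
diagonal entries of `U* f(T) U` are averages of the `f(λ_k)` with weights `|(U* V)_jk|²`, so
Jensen gives `f((U* T U)_jj) ≤ (U* f(T) U)_jj` for convex `f`; this yields the right-hand
inequality. For the left one write `tr S^r = tr (S^(r-1) P) + tr (S^(r-1) Q)` with `S = P + Q`
and bound `⟨v, S^(r-1) v⟩ ≥ π^(r-1)` for each unit eigenvector `v` of `P` with eigenvalue `π`: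
by operator monotonicity of `t ↦ t^s` when `s ≤ 1`, and by Jensen when `s ≥ 1`.
The lower inequality is the upper one applied to `x + y` and `x - y`.
-/

open scoped MatrixOrder

namespace Matrix

variable {n 𝕜 : Type*} [Fintype n] [RCLike 𝕜]

lemma re_star_mul_mul_apply_self_le_of_le {A B : Matrix n n 𝕜} (hAB : A ≤ B) (U : Matrix n n 𝕜)
    (j : n) : RCLike.re ((star U * A * U) j j) ≤ RCLike.re ((star U * B * U) j j) := by
  have h := ((le_iff.mp hAB).conjTranspose_mul_mul_same U).diag_nonneg (i := j)
  rw [← star_eq_conjTranspose, Matrix.mul_sub, Matrix.sub_mul, sub_apply] at h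
  simpa using (RCLike.nonneg_iff.mp h).1

variable [DecidableEq n]

lemma mul_diagonal_mul_star_apply_self (Z : Matrix n n 𝕜) (d : n → ℝ) (j : n) :
    (Z * diagonal (RCLike.ofReal ∘ d) * star Z : Matrix n n 𝕜) j j
      = ((∑ k, ‖Z j k‖ ^ 2 * d k : ℝ) : 𝕜) := by
  rw [mul_apply]
  simp only [mul_diagonal, star_apply, Function.comp_apply, RCLike.star_def]
  push_cast
  refine Finset.sum_congr rfl fun k _ => ?_
  rw [mul_right_comm, RCLike.mul_conj, mul_comm]

lemma sum_norm_sq_apply_eq_one {U : Matrix n n 𝕜} (hU : U ∈ unitaryGroup n 𝕜) (j : n) :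
    ∑ k, ‖U j k‖ ^ 2 = 1 := by
  have h := mul_diagonal_mul_star_apply_self U 1 j
  simp only [Pi.comp_one, map_one, Function.const_one, diagonal_one', mul_one,
    Unitary.mul_star_self_of_mem hU, one_apply_eq, Pi.one_apply, map_sum, map_pow] at h
  exact_mod_cast h.symm

lemma trace_eq_sum_star_mul_mul_apply_self {U : Matrix n n 𝕜} (hU : U ∈ unitaryGroup n 𝕜)
    (M : Matrix n n 𝕜) : M.trace = ∑ j, (star U * M * U) j j := by
  change _ = (star U * M * U).trace
  rw [trace_mul_cycle, Unitary.mul_star_self_of_mem hU, Matrix.one_mul]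

namespace IsHermitian

variable {T : Matrix n n 𝕜} (hT : T.IsHermitian)
include hT

lemma star_mul_cfc_mul_apply_self (U : Matrix n n 𝕜) (f : ℝ → ℝ) (j : n) :
    (star U * cfc f T * U) j j
      = ((∑ k, ‖(star U * hT.eigenvectorUnitary : Matrix n n 𝕜) j k‖ ^ 2
          * f (hT.eigenvalues k) : ℝ) : 𝕜) := by
  rw [← mul_diagonal_mul_star_apply_self, hT.cfc_eq, IsHermitian.cfc,
    Unitary.conjStarAlgAut_apply, star_mul, star_star]
  simp only [Matrix.mul_assoc]
  rfl

lemma star_eigenvectorUnitary_mul_cfc_mul (f : ℝ → ℝ) :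
    star (hT.eigenvectorUnitary : Matrix n n 𝕜) * cfc f T * (hT.eigenvectorUnitary : Matrix n n 𝕜)
      = diagonal (RCLike.ofReal ∘ f ∘ hT.eigenvalues) := by
  rw [hT.cfc_eq, IsHermitian.cfc, Unitary.conjStarAlgAut_apply]
  simp only [← Matrix.mul_assoc, Unitary.coe_star_mul_self, Matrix.one_mul]
  simp only [Matrix.mul_assoc, Unitary.coe_star_mul_self, Matrix.mul_one]

lemma re_trace_cfc (f : ℝ → ℝ) : RCLike.re (cfc f T).trace = ∑ i, f (hT.eigenvalues i) := by
  rw [trace_eq_sum_star_mul_mul_apply_self hT.eigenvectorUnitary.2,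
    hT.star_eigenvectorUnitary_mul_cfc_mul]
  simp

lemma trace_mul_eq_sum_mul_eigenvalues (M : Matrix n n 𝕜) :
    (M * T).trace = ∑ i, (star (hT.eigenvectorUnitary : Matrix n n 𝕜) * M
      * (hT.eigenvectorUnitary : Matrix n n 𝕜)) i i * hT.eigenvalues i := by
  set V := (hT.eigenvectorUnitary : Matrix n n 𝕜)
  have hV := hT.eigenvectorUnitary.2
  have h := hT.star_eigenvectorUnitary_mul_cfc_mul id
  rw [cfc_id ℝ T] at h
  rw [trace_eq_sum_star_mul_mul_apply_self hV]
  refine Finset.sum_congr rfl fun i _ => ?_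
  rw [show star V * (M * T) * V = star V * M * V * (star V * T * V) by
    simp only [Matrix.mul_assoc]
    rw [← Matrix.mul_assoc V, Unitary.mul_star_self_of_mem hV, Matrix.one_mul], h, mul_diagonal]
  rfl

lemma map_re_star_mul_mul_apply_self_le {s : Set ℝ} {f : ℝ → ℝ} (hf : ConvexOn ℝ s f)
    (hs : ∀ k, hT.eigenvalues k ∈ s) {U : Matrix n n 𝕜} (hU : U ∈ unitaryGroup n 𝕜) (j : n) :
    f (RCLike.re ((star U * T * U) j j)) ≤ RCLike.re ((star U * cfc f T * U) j j) := by
  have hW : star U * (hT.eigenvectorUnitary : Matrix n n 𝕜) ∈ unitaryGroup n 𝕜 :=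
    mul_mem (Unitary.star_mem hU) hT.eigenvectorUnitary.2
  conv_lhs => rw [← cfc_id' ℝ T]
  rw [hT.star_mul_cfc_mul_apply_self, hT.star_mul_cfc_mul_apply_self, RCLike.ofReal_re,
    RCLike.ofReal_re]
  exact hf.map_sum_le (fun k _ => sq_nonneg _) (sum_norm_sq_apply_eq_one hW j) fun k _ => hs k

lemma sum_map_re_star_mul_mul_apply_self_le {s : Set ℝ} {f : ℝ → ℝ} (hf : ConvexOn ℝ s f)
    (hs : ∀ k, hT.eigenvalues k ∈ s) {U : Matrix n n 𝕜} (hU : U ∈ unitaryGroup n 𝕜) :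
    ∑ j, f (RCLike.re ((star U * T * U) j j)) ≤ RCLike.re (cfc f T).trace := by
  rw [trace_eq_sum_star_mul_mul_apply_self hU, map_sum]
  exact Finset.sum_le_sum fun j _ => hT.map_re_star_mul_mul_apply_self_le hf hs hU j

end IsHermitian

namespace PosSemidef

lemma re_trace_cfc_rpow_smul {A : Matrix n n 𝕜} (hA : A.PosSemidef) {c : ℝ} (hc : 0 ≤ c)
    (r : ℝ) :
    RCLike.re (cfc (· ^ r : ℝ → ℝ) (c • A)).trace
      = c ^ r * RCLike.re (cfc (· ^ r : ℝ → ℝ) A).trace := by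
  have hspec : ∀ x ∈ spectrum ℝ A, 0 ≤ x := fun x hx => spectrum_nonneg_of_nonneg hA.nonneg hx
  rw [← cfc_comp_smul c (fun x : ℝ => x ^ r) A ((A.finite_real_spectrum.image _).continuousOn _),
    cfc_congr (g := fun x => c ^ r * x ^ r) fun x hx => by
      simp [smul_eq_mul, Real.mul_rpow hc (hspec x hx)],
    cfc_const_mul _ _ _ (A.finite_real_spectrum.continuousOn _), trace_smul, RCLike.smul_re]

lemma re_trace_cfc_rpow_add_le {P Q : Matrix n n 𝕜} (hP : P.PosSemidef) (hQ : Q.PosSemidef)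
    {r : ℝ} (hr : 1 ≤ r) :
    RCLike.re (cfc (· ^ r : ℝ → ℝ) (P + Q)).trace
      ≤ 2 ^ (r - 1) * (RCLike.re (cfc (· ^ r : ℝ → ℝ) P).trace
        + RCLike.re (cfc (· ^ r : ℝ → ℝ) Q).trace) := by
  have hS := hP.add hQ
  set W := (hS.1.eigenvectorUnitary : Matrix n n 𝕜)
  have hW : W ∈ unitaryGroup n 𝕜 := hS.1.eigenvectorUnitary.2
  set a := fun j => RCLike.re ((star W * P * W) j j)
  set b := fun j => RCLike.re ((star W * Q * W) j j)
  have ha : ∀ j, 0 ≤ a j := fun j => by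
    simpa using re_star_mul_mul_apply_self_le_of_le hP.nonneg W j
  have hb : ∀ j, 0 ≤ b j := fun j => by
    simpa using re_star_mul_mul_apply_self_le_of_le hQ.nonneg W j
  have hσ : ∀ j, hS.1.eigenvalues j = a j + b j := fun j => by
    have h := congrFun (congrFun (hS.1.star_eigenvectorUnitary_mul_cfc_mul id) j) j
    rw [cfc_id ℝ (P + Q), Matrix.mul_add, Matrix.add_mul] at h
    simpa [a, b] using congrArg RCLike.re h.symm
  have hconv := convexOn_rpow hr
  calc RCLike.re (cfc (· ^ r : ℝ → ℝ) (P + Q)).trace = ∑ j, (a j + b j) ^ r := by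
        rw [hS.1.re_trace_cfc]; simp only [hσ]
    _ ≤ ∑ j, 2 ^ (r - 1) * (a j ^ r + b j ^ r) := Finset.sum_le_sum fun j _ => by
        have := NNReal.rpow_add_le_mul_rpow_add_rpow ⟨a j, ha j⟩ ⟨b j, hb j⟩ hr
        exact_mod_cast this
    _ = 2 ^ (r - 1) * (∑ j, a j ^ r + ∑ j, b j ^ r) := by
        rw [← Finset.mul_sum, Finset.sum_add_distrib]
    _ ≤ 2 ^ (r - 1) * (RCLike.re (cfc (· ^ r : ℝ → ℝ) P).trace
          + RCLike.re (cfc (· ^ r : ℝ → ℝ) Q).trace) := by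
        gcongr
        · exact hP.1.sum_map_re_star_mul_mul_apply_self_le hconv hP.eigenvalues_nonneg hW
        · exact hQ.1.sum_map_re_star_mul_mul_apply_self_le hconv hQ.eigenvalues_nonneg hW

section Complex

variable {P S : Matrix n n ℂ}

-- Löwner–Heinz, available for C⋆-algebras; `Matrix n n ℂ` is one with the L2 operator norm.
open scoped Matrix.Norms.L2Operator in
lemma cfc_rpow_le_cfc_rpow (hP : P.PosSemidef) (hPS : P ≤ S) {s : ℝ} (hs : s ∈ Set.Icc 0 1) :
    cfc (· ^ s : ℝ → ℝ) P ≤ cfc (· ^ s : ℝ → ℝ) S := by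
  rw [← CFC.rpow_eq_cfc_real hP.nonneg, ← CFC.rpow_eq_cfc_real (hP.nonneg.trans hPS)]
  exact CFC.rpow_le_rpow hs hPS

lemma eigenvalues_rpow_le_re_star_mul_cfc_rpow_mul_apply_self (hP : P.PosSemidef) (hPS : P ≤ S)
    {s : ℝ} (hs : 0 ≤ s) (i : n) :
    hP.1.eigenvalues i ^ s ≤ RCLike.re ((star (hP.1.eigenvectorUnitary : Matrix n n ℂ)
      * cfc (· ^ s : ℝ → ℝ) S * (hP.1.eigenvectorUnitary : Matrix n n ℂ)) i i) := by
  set V := (hP.1.eigenvectorUnitary : Matrix n n ℂ)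
  have hS : S.PosSemidef := (hP.nonneg.trans hPS).posSemidef
  have hdiag (f : ℝ → ℝ) : RCLike.re ((star V * cfc f P * V) i i) = f (hP.1.eigenvalues i) := by
    rw [hP.1.star_eigenvectorUnitary_mul_cfc_mul]
    simp
  have hπ : RCLike.re ((star V * P * V) i i) = hP.1.eigenvalues i := by
    simpa only [cfc_id' ℝ P] using hdiag fun x => x
  rcases le_total s 1 with hs1 | hs1
  · calc hP.1.eigenvalues i ^ s = RCLike.re ((star V * cfc (· ^ s : ℝ → ℝ) P * V) i i) :=
          (hdiag (· ^ s)).symm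
      _ ≤ _ := re_star_mul_mul_apply_self_le_of_le (hP.cfc_rpow_le_cfc_rpow hPS ⟨hs, hs1⟩) V i
  · calc hP.1.eigenvalues i ^ s ≤ RCLike.re ((star V * S * V) i i) ^ s :=
          Real.rpow_le_rpow (hP.eigenvalues_nonneg i)
            (hπ ▸ re_star_mul_mul_apply_self_le_of_le hPS V i) hs
      _ ≤ _ := hS.1.map_re_star_mul_mul_apply_self_le (convexOn_rpow hs1) hS.eigenvalues_nonneg
          hP.1.eigenvectorUnitary.2 i

lemma re_trace_cfc_rpow_le_re_trace_mul (hP : P.PosSemidef) (hPS : P ≤ S) {r : ℝ} (hr : 1 ≤ r) :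
    RCLike.re (cfc (· ^ r : ℝ → ℝ) P).trace
      ≤ RCLike.re (cfc (· ^ (r - 1) : ℝ → ℝ) S * P).trace := by
  rw [hP.1.re_trace_cfc, hP.1.trace_mul_eq_sum_mul_eigenvalues, map_sum]
  refine Finset.sum_le_sum fun i _ => ?_
  have hπ := hP.eigenvalues_nonneg i
  rw [RCLike.re_mul_ofReal, ← sub_add_cancel r 1, Real.rpow_add' hπ (by linarith), Real.rpow_one,
    add_sub_cancel_right]
  exact mul_le_mul_of_nonneg_right
    (hP.eigenvalues_rpow_le_re_star_mul_cfc_rpow_mul_apply_self hPS (by linarith) i) hπ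

lemma re_trace_cfc_rpow_add_re_trace_cfc_rpow_le {Q : Matrix n n ℂ} (hP : P.PosSemidef)
    (hQ : Q.PosSemidef) {r : ℝ} (hr : 1 ≤ r) :
    RCLike.re (cfc (· ^ r : ℝ → ℝ) P).trace + RCLike.re (cfc (· ^ r : ℝ → ℝ) Q).trace
      ≤ RCLike.re (cfc (· ^ r : ℝ → ℝ) (P + Q)).trace := by
  have hspec : ∀ x ∈ spectrum ℝ (P + Q), 0 ≤ x := fun x hx =>
    spectrum_nonneg_of_nonneg (hP.add hQ).nonneg hx
  have hsplit : cfc (· ^ r : ℝ → ℝ) (P + Q) = cfc (· ^ (r - 1) : ℝ → ℝ) (P + Q) * (P + Q) := by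
    have h := cfc_mul (· ^ (r - 1) : ℝ → ℝ) (fun x => x) (P + Q)
      ((P + Q).finite_real_spectrum.continuousOn _)
    rw [cfc_id' ℝ (P + Q)] at h
    rw [← h]
    refine cfc_congr fun x hx => ?_
    rw [← Real.rpow_add_one' (hspec x hx) (by linarith), sub_add_cancel]
  rw [hsplit, Matrix.mul_add, trace_add, map_add]
  exact add_le_add (hP.re_trace_cfc_rpow_le_re_trace_mul (le_add_of_nonneg_right hQ.nonneg) hr)
    (hQ.re_trace_cfc_rpow_le_re_trace_mul (le_add_of_nonneg_left hP.nonneg) hr)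

end Complex

end PosSemidef

end Matrix

section Schatten

variable {m : ℕ}

lemma schatten_eq_re_trace_cfc (p : ℝ) (x : Matrix (Fin m) (Fin m) ℂ) :
    schatten p x = RCLike.re (cfc (· ^ (p / 2) : ℝ → ℝ) (xᴴ * x)).trace :=
  ((isHermitian_conjTranspose_mul_self x).re_trace_cfc (· ^ (p / 2))).symm

lemma schatten_smul (p : ℝ) {c : ℝ} (hc : 0 ≤ c) (x : Matrix (Fin m) (Fin m) ℂ) :
    schatten p (c • x) = c ^ p * schatten p x := by
  rw [schatten_eq_re_trace_cfc, schatten_eq_re_trace_cfc, conjTranspose_smul, star_trivial,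
    smul_mul_smul_comm, (posSemidef_conjTranspose_mul_self x).re_trace_cfc_rpow_smul
      (mul_self_nonneg c), ← sq, ← Real.rpow_two, ← Real.rpow_mul hc]
  ring_nf

lemma schatten_add_add_schatten_sub_le (x y : Matrix (Fin m) (Fin m) ℂ) {p : ℝ} (hp : 2 ≤ p) :
    schatten p (x + y) + schatten p (x - y) ≤ 2 ^ (p - 1) * (schatten p x + schatten p y) := by
  have hr : 1 ≤ p / 2 := by linarith
  have hX := posSemidef_conjTranspose_mul_self x
  have hY := posSemidef_conjTranspose_mul_self y
  have hparallelogram :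
      (x + y)ᴴ * (x + y) + (x - y)ᴴ * (x - y) = (2 : ℝ) • (xᴴ * x + yᴴ * y) := by
    rw [conjTranspose_add, conjTranspose_sub, two_smul]
    noncomm_ring
  simp only [schatten_eq_re_trace_cfc]
  calc _ ≤ RCLike.re (cfc (· ^ (p / 2) : ℝ → ℝ)
          ((x + y)ᴴ * (x + y) + (x - y)ᴴ * (x - y))).trace :=
        PosSemidef.re_trace_cfc_rpow_add_re_trace_cfc_rpow_le
          (posSemidef_conjTranspose_mul_self _) (posSemidef_conjTranspose_mul_self _) hr
    _ = 2 ^ (p / 2) * RCLike.re (cfc (· ^ (p / 2) : ℝ → ℝ) (xᴴ * x + yᴴ * y)).trace := by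
        rw [hparallelogram, (hX.add hY).re_trace_cfc_rpow_smul zero_le_two]
    _ ≤ 2 ^ (p / 2) * (2 ^ (p / 2 - 1) * (RCLike.re (cfc (· ^ (p / 2) : ℝ → ℝ) (xᴴ * x)).trace
          + RCLike.re (cfc (· ^ (p / 2) : ℝ → ℝ) (yᴴ * y)).trace)) := by
        gcongr
        exact hX.re_trace_cfc_rpow_add_le hY hr
    _ = _ := by
        rw [← mul_assoc, ← Real.rpow_add two_pos]
        ring_nf

end Schatten

/-- Clarkson inequalities for `p ≥ 2`:
`2(‖x‖ₚᵖ + ‖y‖ₚᵖ) ≤ ‖x+y‖ₚᵖ + ‖x-y‖ₚᵖ ≤ 2^{p-1}(‖x‖ₚᵖ + ‖y‖ₚᵖ)`. -/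
theorem clarkson_ge_two {n : ℕ} (x y : Matrix (Fin n) (Fin n) ℂ) (p : ℝ) (hp : 2 ≤ p) :
    2 * (schatten p x + schatten p y) ≤ schatten p (x + y) + schatten p (x - y) ∧
    schatten p (x + y) + schatten p (x - y)
      ≤ (2 : ℝ) ^ (p - 1) * (schatten p x + schatten p y) := by
  refine ⟨?_, schatten_add_add_schatten_sub_le x y hp⟩
  have h := schatten_add_add_schatten_sub_le (x + y) (x - y) hp
  rw [show x + y + (x - y) = (2 : ℝ) • x by rw [two_smul]; abel,
    show x + y - (x - y) = (2 : ℝ) • y by rw [two_smul]; abel,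
    schatten_smul p zero_le_two, schatten_smul p zero_le_two, ← mul_add,
    Real.rpow_sub_one two_ne_zero] at h
  have h2 : (0 : ℝ) < 2 ^ p / 2 := by positivity
  refine le_of_mul_le_mul_left ?_ h2
  calc 2 ^ p / 2 * (2 * (schatten p x + schatten p y))
      = 2 ^ p * (schatten p x + schatten p y) := by ring
    _ ≤ _ := h
end

section
/- Let x_0,…,x_{n-1} be m×m complex matrices and p ≥ 2 a real number. Then ‖∑_{j=0}^{n-1} x_j‖_p^p + ∑_{0≤j<k≤n-1} ‖x_j − x_k‖_p^p ≤ n^{p−1} ∑_{j=0}^{n-1} ‖x_j‖_p^p, where ‖x‖_p^p = trace((x* x)^{p/2}) is the p-th power of the Schatten p-norm. -/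
open Matrix
open scoped NNReal ComplexOrder

/-!
Put `A = (∑ xⱼ)ᴴ (∑ xⱼ)`, `Dⱼₖ = (xⱼ - xₖ)ᴴ (xⱼ - xₖ)`, `B = ∑ xⱼᴴ xⱼ` and `q = p / 2 ≥ 1`.
A Lagrange-type identity gives `A + ∑_{j<k} Dⱼₖ = n B`. The functional `X ↦ tr X^q` is
superadditive on positive semidefinite matrices, so the left-hand side is at most
`tr (n B)^q = n^q tr B^q`, and Jensen's inequality `tr (∑ Bⱼ)^q ≤ n^(q-1) ∑ tr Bⱼ^q` finishes.

Superadditivity: if `0 ≤ A ≤ M` then `tr A^q ≤ tr (A M^(q-1))`. In an eigenbasis `(vₖ)` of `A`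
this reduces to `αₖ^(q-1) ≤ ⟪vₖ, M^(q-1) vₖ⟫`, which is the Löwner–Heinz inequality when
`q - 1 ≤ 1` and Jensen's inequality when `q - 1 ≥ 1`. Adding these bounds for two summands of
`M` gives `tr (M M^(q-1)) = tr M^q`. The trace form of Jensen's inequality goes through the
diagonals of the `Bⱼ` in an eigenbasis of `∑ Bⱼ`.
-/

open Finset
-- The L2 operator norm makes square matrices a C⋆-algebra, where `CFC.rpow_le_rpow`
-- (Löwner–Heinz) applies.
open scoped MatrixOrder Matrix.Norms.L2Operator InnerProductSpace

lemma Finset.sum_sum_Ioi_add_swap_s11 {ι M : Type*} [Fintype ι] [LinearOrder ι]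
    [LocallyFiniteOrderTop ι] [LocallyFiniteOrderBot ι] [AddCommMonoid M] (h : ι → ι → M) :
    ∑ j, ∑ k ∈ Ioi j, (h j k + h k j) + ∑ j, h j j = ∑ j, ∑ k, h j k := by
  have hswap : ∑ j, ∑ k ∈ Ioi j, h k j = ∑ j, ∑ k ∈ Iio j, h j k :=
    sum_comm' fun j k => by simp
  have hsplit : ∀ j, ∑ k, h j k = ∑ k ∈ Ioi j, h j k + ∑ k ∈ Iio j, h j k + h j j := fun j => by
    rw [← sum_filter_add_sum_filter_not univ (· < j)]
    simp only [not_lt, filter_gt_eq_Iio, filter_le_eq_Ici, ← add_sum_Ioi_eq_sum_Ici]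
    abel
  simp_rw [sum_add_distrib, hswap, hsplit, sum_add_distrib]

lemma star_sum_mul_sum_add_sum_Ioi_star_sub_mul_sub {ι R : Type*} [Fintype ι] [LinearOrder ι]
    [LocallyFiniteOrderTop ι] [LocallyFiniteOrderBot ι] [Ring R] [StarRing R] (x : ι → R) :
    star (∑ j, x j) * ∑ j, x j + ∑ j, ∑ k ∈ Ioi j, star (x j - x k) * (x j - x k)
      = Fintype.card ι • ∑ j, star (x j) * x j := by
  have hcross := sum_sum_Ioi_add_swap_s11 fun j k => star (x j) * x k
  have hdiag := sum_sum_Ioi_add_swap_s11 fun j _ => star (x j) * x j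
  have hexpand : ∀ j k, star (x j - x k) * (x j - x k)
      = (star (x j) * x j + star (x k) * x k) - (star (x j) * x k + star (x k) * x j) := by
    intro j k
    simp only [star_sub, sub_mul, mul_sub]
    abel
  beta_reduce at hdiag
  simp only [sum_const, card_univ, ← smul_sum] at hdiag
  simp_rw [hexpand, sum_sub_distrib, star_sum, sum_mul, mul_sum, ← hdiag, ← hcross]
  abel

section Eigenbasis

variable {n : Type*} [Fintype n] [DecidableEq n] {A B C M : Matrix n n ℂ}

namespace Matrix.IsHermitian

noncomputable def eigenbasisDiag (hM : M.IsHermitian) (B : Matrix n n ℂ) (i : n) : ℝ :=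
  RCLike.re (star ⇑(hM.eigenvectorBasis i) ⬝ᵥ (B *ᵥ ⇑(hM.eigenvectorBasis i)))

noncomputable def eigenOverlap (hA : A.IsHermitian) (hB : B.IsHermitian) (k i : n) : ℝ :=
  ‖⟪hA.eigenvectorBasis k, hB.eigenvectorBasis i⟫_ℂ‖ ^ 2

lemma re_dotProduct_cfc_mulVec (hM : M.IsHermitian) (f : ℝ → ℝ) (v : EuclideanSpace ℂ n) :
    RCLike.re (star ⇑v ⬝ᵥ (cfc f M *ᵥ ⇑v))
      = ∑ i, f (hM.eigenvalues i) * ‖⟪v, hM.eigenvectorBasis i⟫_ℂ‖ ^ 2 := by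
  set U : Matrix n n ℂ := (hM.eigenvectorUnitary : Matrix n n ℂ)
  have hw : star U *ᵥ ⇑v = fun i => ⟪hM.eigenvectorBasis i, v⟫_ℂ := by
    ext i
    simp [U, mulVec, dotProduct, EuclideanSpace.inner_eq_star_dotProduct, mul_comm]
  have hw' : star ⇑v ᵥ* U = star (star U *ᵥ ⇑v) := by
    rw [star_mulVec, star_eq_conjTranspose, conjTranspose_conjTranspose]
  rw [hM.cfc_eq, IsHermitian.cfc, Unitary.conjStarAlgAut_apply, ← mulVec_mulVec, ← mulVec_mulVec,
    dotProduct_mulVec, hw', hw, dotProduct, map_sum]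
  refine sum_congr rfl fun i _ => ?_
  rw [mulVec_diagonal, norm_inner_symm, Function.comp_apply, Function.comp_apply, Pi.star_apply,
    mul_left_comm, RCLike.star_def, RCLike.conj_mul]
  norm_cast

lemma eigenbasisDiag_cfc (hA : A.IsHermitian) (hM : M.IsHermitian) (f : ℝ → ℝ) (k : n) :
    hA.eigenbasisDiag (cfc f M) k = ∑ i, f (hM.eigenvalues i) * hA.eigenOverlap hM k i :=
  hM.re_dotProduct_cfc_mulVec f _

lemma eigenbasisDiag_cfc_self (hA : A.IsHermitian) (f : ℝ → ℝ) (k : n) :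
    hA.eigenbasisDiag (cfc f A) k = f (hA.eigenvalues k) := by
  simp [eigenbasisDiag_cfc hA hA, eigenOverlap, OrthonormalBasis.inner_eq_ite, apply_ite]

lemma eigenbasisDiag_self (hM : M.IsHermitian) (i : n) : hM.eigenbasisDiag M i = hM.eigenvalues i :=
  (hM.eigenvalues_eq i).symm

lemma eigenbasisDiag_eq_sum (hM : M.IsHermitian) (hB : B.IsHermitian) (i : n) :
    hM.eigenbasisDiag B i = ∑ k, hB.eigenvalues k * hM.eigenOverlap hB i k := by
  have h := hM.eigenbasisDiag_cfc hB id i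
  rw [cfc_id ℝ B hB.isSelfAdjoint] at h
  exact h

lemma eigenbasisDiag_add (hM : M.IsHermitian) (i : n) :
    hM.eigenbasisDiag (B + C) i = hM.eigenbasisDiag B i + hM.eigenbasisDiag C i := by
  simp [eigenbasisDiag, add_mulVec, dotProduct_add]

lemma eigenbasisDiag_sum {ι : Type*} (hM : M.IsHermitian) (s : Finset ι) (X : ι → Matrix n n ℂ)
    (i : n) : hM.eigenbasisDiag (∑ t ∈ s, X t) i = ∑ t ∈ s, hM.eigenbasisDiag (X t) i := by
  simp [eigenbasisDiag, sum_mulVec, dotProduct_sum]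

lemma eigenbasisDiag_nonneg (hM : M.IsHermitian) (hB : B.PosSemidef) (i : n) :
    0 ≤ hM.eigenbasisDiag B i :=
  hB.re_dotProduct_nonneg _

lemma eigenbasisDiag_mono (hM : M.IsHermitian) (hBC : B ≤ C) (i : n) :
    hM.eigenbasisDiag B i ≤ hM.eigenbasisDiag C i := by
  have := hM.eigenbasisDiag_nonneg (Matrix.le_iff.mp hBC) i
  simp only [eigenbasisDiag, sub_mulVec, dotProduct_sub, map_sub] at this
  exact sub_nonneg.mp this

lemma eigenOverlap_nonneg (hA : A.IsHermitian) (hB : B.IsHermitian) (k i : n) :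
    0 ≤ hA.eigenOverlap hB k i := by
  unfold eigenOverlap; positivity

lemma eigenOverlap_comm (hA : A.IsHermitian) (hB : B.IsHermitian) (k i : n) :
    hA.eigenOverlap hB k i = hB.eigenOverlap hA i k := by
  rw [eigenOverlap, eigenOverlap, norm_inner_symm]

lemma sum_eigenOverlap (hA : A.IsHermitian) (hB : B.IsHermitian) (k : n) :
    ∑ i, hA.eigenOverlap hB k i = 1 := by
  simp [eigenOverlap, OrthonormalBasis.sum_sq_norm_inner_left]

end Matrix.IsHermitian

lemma Matrix.PosSemidef.rpow_eigenvalue_le_sum_rpow_mul_eigenOverlap (hA : A.PosSemidef)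
    (hM : M.IsHermitian) (hAM : A ≤ M) {r : ℝ} (hr : 0 ≤ r) (k : n) :
    hA.1.eigenvalues k ^ r ≤ ∑ i, hM.eigenvalues i ^ r * hA.1.eigenOverlap hM k i := by
  rcases le_total r 1 with hr1 | hr1
  · have hLH : A ^ r ≤ M ^ r := CFC.rpow_le_rpow ⟨hr, hr1⟩ hAM
    rw [CFC.rpow_eq_cfc_real hA.nonneg, CFC.rpow_eq_cfc_real (hA.nonneg.trans hAM)] at hLH
    simpa only [IsHermitian.eigenbasisDiag_cfc_self, hA.1.eigenbasisDiag_cfc hM]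
      using hA.1.eigenbasisDiag_mono hLH k
  · have hμ : ∀ i, 0 ≤ hM.eigenvalues i := (hA.nonneg.trans hAM).posSemidef.eigenvalues_nonneg
    have hαμ : hA.1.eigenvalues k ≤ ∑ i, hA.1.eigenOverlap hM k i * hM.eigenvalues i := by
      have := hA.1.eigenbasisDiag_mono hAM k
      simpa only [IsHermitian.eigenbasisDiag_self, hA.1.eigenbasisDiag_eq_sum hM, mul_comm]
        using this
    calc hA.1.eigenvalues k ^ r
        ≤ (∑ i, hA.1.eigenOverlap hM k i * hM.eigenvalues i) ^ r :=
          Real.rpow_le_rpow (hA.eigenvalues_nonneg k) hαμ (by linarith)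
      _ ≤ ∑ i, hA.1.eigenOverlap hM k i * hM.eigenvalues i ^ r :=
          Real.rpow_arith_mean_le_arith_mean_rpow _ _ _ (fun i _ => hA.1.eigenOverlap_nonneg hM k i)
            (hA.1.sum_eigenOverlap hM k) (fun i _ => hμ i) hr1
      _ = ∑ i, hM.eigenvalues i ^ r * hA.1.eigenOverlap hM k i := by simp_rw [mul_comm]

end Eigenbasis

section TraceRpow

variable {d : ℕ} {A B M : Matrix (Fin d) (Fin d) ℂ} {q : ℝ}

lemma traceRpow_congr (hA : A.IsHermitian) (hB : B.IsHermitian) (h : A = B) :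
    traceRpow q A hA = traceRpow q B hB := by
  subst h; rfl

lemma traceRpow_le_sum_rpow_mul_eigenbasisDiag (hA : A.PosSemidef) (hM : M.IsHermitian)
    (hAM : A ≤ M) (hq : 1 ≤ q) :
    traceRpow q A hA.1 ≤ ∑ i, hM.eigenvalues i ^ (q - 1) * hM.eigenbasisDiag A i := by
  have hα := hA.eigenvalues_nonneg
  calc traceRpow q A hA.1 = ∑ k, hA.1.eigenvalues k * hA.1.eigenvalues k ^ (q - 1) := by
        refine sum_congr rfl fun k _ => ?_
        rw [← Real.rpow_one_add' (hα k) (by linarith), add_sub_cancel]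
    _ ≤ ∑ k, hA.1.eigenvalues k * ∑ i, hM.eigenvalues i ^ (q - 1) * hA.1.eigenOverlap hM k i := by
        gcongr with k
        · exact hα k
        · exact hA.rpow_eigenvalue_le_sum_rpow_mul_eigenOverlap hM hAM (by linarith) k
    _ = ∑ i, hM.eigenvalues i ^ (q - 1) * hM.eigenbasisDiag A i := by
        simp_rw [hM.eigenbasisDiag_eq_sum hA.1, mul_sum, hA.1.eigenOverlap_comm hM]
        rw [sum_comm]
        exact sum_congr rfl fun _ _ => sum_congr rfl fun _ _ => by ring

lemma traceRpow_add_le (hA : A.PosSemidef) (hB : B.PosSemidef) (hq : 1 ≤ q) :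
    traceRpow q A hA.1 + traceRpow q B hB.1 ≤ traceRpow q (A + B) (hA.add hB).1 := by
  have hM := (hA.add hB).1
  have hμ := (hA.add hB).eigenvalues_nonneg
  calc traceRpow q A hA.1 + traceRpow q B hB.1
      ≤ ∑ i, hM.eigenvalues i ^ (q - 1) * hM.eigenbasisDiag A i
        + ∑ i, hM.eigenvalues i ^ (q - 1) * hM.eigenbasisDiag B i :=
        add_le_add
          (traceRpow_le_sum_rpow_mul_eigenbasisDiag hA hM (le_add_of_nonneg_right hB.nonneg) hq)
          (traceRpow_le_sum_rpow_mul_eigenbasisDiag hB hM (le_add_of_nonneg_left hA.nonneg) hq)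
    _ = traceRpow q (A + B) hM := by
        rw [← sum_add_distrib, traceRpow]
        refine sum_congr rfl fun i _ => ?_
        rw [← mul_add, ← hM.eigenbasisDiag_add, hM.eigenbasisDiag_self,
          ← Real.rpow_add_one' (hμ i) (by linarith), sub_add_cancel]

lemma traceRpow_nonneg (hA : A.PosSemidef) : 0 ≤ traceRpow q A hA.1 :=
  sum_nonneg fun k _ => Real.rpow_nonneg (hA.eigenvalues_nonneg k) q

lemma sum_traceRpow_le_traceRpow_sum {ι : Type*} (s : Finset ι)
    {B : ι → Matrix (Fin d) (Fin d) ℂ} (hB : ∀ t, (B t).PosSemidef) (hq : 1 ≤ q) :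
    ∑ t ∈ s, traceRpow q (B t) (hB t).1
      ≤ traceRpow q (∑ t ∈ s, B t) (posSemidef_sum s fun t _ => hB t).1 := by
  classical
  induction s using Finset.induction_on with
  | empty => exact traceRpow_nonneg (posSemidef_sum ∅ fun t _ => hB t)
  | insert a s ha ih =>
    have hs := posSemidef_sum s fun t _ => hB t
    rw [sum_insert ha, traceRpow_congr _ ((hB a).add hs).1 (sum_insert ha)]
    exact (add_le_add le_rfl ih).trans (traceRpow_add_le (hB a) hs hq)

lemma sum_rpow_eigenbasisDiag_le_traceRpow (hM : M.IsHermitian) (hB : B.PosSemidef)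
    (hq : 1 ≤ q) : ∑ i, hM.eigenbasisDiag B i ^ q ≤ traceRpow q B hB.1 := by
  calc ∑ i, hM.eigenbasisDiag B i ^ q
      = ∑ i, (∑ k, hM.eigenOverlap hB.1 i k * hB.1.eigenvalues k) ^ q := by
        simp_rw [hM.eigenbasisDiag_eq_sum hB.1, mul_comm]
    _ ≤ ∑ i, ∑ k, hM.eigenOverlap hB.1 i k * hB.1.eigenvalues k ^ q := by
        gcongr with i
        exact Real.rpow_arith_mean_le_arith_mean_rpow _ _ _
          (fun k _ => hM.eigenOverlap_nonneg hB.1 i k) (hM.sum_eigenOverlap hB.1 i)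
          (fun k _ => hB.eigenvalues_nonneg k) hq
    _ = traceRpow q B hB.1 := by
        rw [sum_comm, traceRpow]
        refine sum_congr rfl fun k _ => ?_
        simp_rw [← sum_mul, hM.eigenOverlap_comm hB.1, hB.1.sum_eigenOverlap, one_mul]

lemma traceRpow_sum_le_card_rpow_mul_sum {ι : Type*} (s : Finset ι)
    {B : ι → Matrix (Fin d) (Fin d) ℂ} (hB : ∀ t, (B t).PosSemidef) (hq : 1 ≤ q) :
    traceRpow q (∑ t ∈ s, B t) (posSemidef_sum s fun t _ => hB t).1
      ≤ (s.card : ℝ) ^ (q - 1) * ∑ t ∈ s, traceRpow q (B t) (hB t).1 := by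
  set hM := (posSemidef_sum s fun t _ => hB t).1
  calc traceRpow q (∑ t ∈ s, B t) hM
      = ∑ i, (∑ t ∈ s, hM.eigenbasisDiag (B t) i) ^ q := by
        simp_rw [traceRpow, ← hM.eigenbasisDiag_sum, hM.eigenbasisDiag_self]
    _ ≤ ∑ i, (s.card : ℝ) ^ (q - 1) * ∑ t ∈ s, hM.eigenbasisDiag (B t) i ^ q := by
        gcongr with i
        exact Real.rpow_sum_le_const_mul_sum_rpow_of_nonneg s hq
          fun t _ => hM.eigenbasisDiag_nonneg (hB t) i
    _ ≤ (s.card : ℝ) ^ (q - 1) * ∑ t ∈ s, traceRpow q (B t) (hB t).1 := by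
        rw [← mul_sum, sum_comm]
        gcongr with t
        exact sum_rpow_eigenbasisDiag_le_traceRpow hM (hB t) hq

lemma traceRpow_cfc (hB : B.IsHermitian) (f : ℝ → ℝ) (h : (cfc f B).IsHermitian) :
    traceRpow q (cfc f B) h = ∑ i, f (hB.eigenvalues i) ^ q := by
  have hroots := h.roots_charpoly_eq_eigenvalues
  rw [hB.charpoly_cfc_eq f, Polynomial.roots_prod _ _
    (by simp [prod_ne_zero_iff, Polynomial.X_sub_C_ne_zero])] at hroots
  simp only [Polynomial.roots_X_sub_C, Multiset.bind_singleton] at hroots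
  have := congrArg (fun s : Multiset ℂ => (s.map fun z => RCLike.re z ^ q).sum) hroots
  simp only [Multiset.map_map, Function.comp_def, RCLike.ofReal_re] at this
  rw [traceRpow, sum_eq_multiset_sum, sum_eq_multiset_sum]
  exact this.symm

lemma traceRpow_eq_rpow_mul_of_eq_smul (hA : A.IsHermitian) (hB : B.PosSemidef) {c : ℝ}
    (hc : 0 ≤ c) (h : A = c • B) : traceRpow q A hA = c ^ q * traceRpow q B hB.1 := by
  have hcfc : A = cfc (c * ·) B := by rw [cfc_const_mul_id c B hB.1.isSelfAdjoint, h]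
  rw [traceRpow_congr hA (hcfc ▸ hA) hcfc, traceRpow_cfc hB.1, traceRpow, mul_sum]
  simp_rw [Real.mul_rpow hc (hB.eigenvalues_nonneg _)]

end TraceRpow

/-- Clarkson inequality for `n`-tuples with equal weights, `p ≥ 2`:
`‖∑ xⱼ‖ₚᵖ + ∑_{j<k} ‖xⱼ-xₖ‖ₚᵖ ≤ n^{p-1} ∑ ‖xⱼ‖ₚᵖ`. -/
theorem clarkson_tuples_ge_two {m : ℕ} (n : ℕ) (x : Fin n → Matrix (Fin m) (Fin m) ℂ)
    (p : ℝ) (hp : 2 ≤ p) :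
    schatten p (∑ j, x j) + ∑ j : Fin n, ∑ k ∈ Finset.Ioi j, schatten p (x j - x k)
      ≤ (n : ℝ) ^ (p - 1) * ∑ j, schatten p (x j) := by
  have hq : 1 ≤ p / 2 := by linarith
  have hx j : ((x j)ᴴ * x j).PosSemidef := posSemidef_conjTranspose_mul_self _
  have hD j k : ((x j - x k)ᴴ * (x j - x k)).PosSemidef := posSemidef_conjTranspose_mul_self _
  have hDrow j := posSemidef_sum (Ioi j) fun k _ => hD j k
  have hB := posSemidef_sum univ fun j _ => hx j
  have hA := posSemidef_conjTranspose_mul_self (∑ j, x j)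
  have hDall := posSemidef_sum univ fun j _ => hDrow j
  have hlagrange : (∑ j, x j)ᴴ * ∑ j, x j + ∑ j, ∑ k ∈ Ioi j, (x j - x k)ᴴ * (x j - x k)
      = (n : ℝ) • ∑ j, (x j)ᴴ * x j := by
    have := star_sum_mul_sum_add_sum_Ioi_star_sub_mul_sub x
    rwa [Fintype.card_fin, ← Nat.cast_smul_eq_nsmul ℝ] at this
  calc schatten p (∑ j, x j) + ∑ j, ∑ k ∈ Ioi j, schatten p (x j - x k)
      ≤ schatten p (∑ j, x j) + traceRpow (p / 2) _ hDall.1 := by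
        gcongr
        exact (sum_le_sum fun j _ => sum_traceRpow_le_traceRpow_sum _ (hD j) hq).trans
          (sum_traceRpow_le_traceRpow_sum _ hDrow hq)
    _ ≤ traceRpow (p / 2) _ (hA.add hDall).1 := traceRpow_add_le hA hDall hq
    _ = (n : ℝ) ^ (p / 2) * traceRpow (p / 2) (∑ j, (x j)ᴴ * x j) hB.1 :=
        traceRpow_eq_rpow_mul_of_eq_smul _ hB (Nat.cast_nonneg n) hlagrange
    _ ≤ (n : ℝ) ^ (p / 2) * ((n : ℝ) ^ (p / 2 - 1) * ∑ j, schatten p (x j)) := by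
        gcongr
        have := traceRpow_sum_le_card_rpow_mul_sum univ hx hq
        rwa [card_univ, Fintype.card_fin] at this
    _ = (n : ℝ) ^ (p - 1) * ∑ j, schatten p (x j) := by
        rw [← mul_assoc, ← Real.rpow_add' (Nat.cast_nonneg _) (by linarith)]
        ring_nf
end

section
/- Let x_0,…,x_{n-1} be m×m complex matrices, ω_j = e^{2πij/n} the n-th roots of unity, and 0 < p ≤ 2. Then (1/n) ∑_{k=0}^{n-1} ‖∑_{j=0}^{n-1} ω_j^k x_j‖_p^p ≤ ‖(∑_{j=0}^{n-1} x_j* x_j)^{1/2}‖_p^p ≤ n^{−p/2} ∑_{k=0}^{n-1} ‖∑_{j=0}^{n-1} ω_j^k x_j‖_p^p. -/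
open Matrix
open scoped NNReal ComplexOrder

/-! With `A k = ∑ⱼ ωⱼᵏ xⱼ` and `S = ∑ⱼ xⱼᴴ xⱼ`, orthogonality of the characters `j ↦ ωⱼᵏ` gives
`∑ₖ (A k)ᴴ (A k) = n S`. Both inequalities are then trace inequalities for the concave function
`g t = t ^ (p / 2)`, which vanishes at `0`. The left one is the trace Jensen inequality
`∑ₖ tr g(Hₖ) ≤ n tr g(n⁻¹ ∑ₖ Hₖ)`; the right one is Rotfeld's subadditivity
`tr g(∑ₖ Hₖ) ≤ ∑ₖ tr g(Hₖ)` combined with `tr g(n S) = n ^ (p / 2) tr g(S)`.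

Both rest on Peierls' inequality: the diagonal of `H` in any orthonormal basis is a doubly
stochastic average of its eigenvalues, so `tr g(H) ≤ ∑ᵢ g(Hᵢᵢ)`. For Rotfeld it is applied to the
block diagonal of `Y Yᴴ = [[A, √A √B], [√B √A, B]]`, where `Y = [[√A, 0], [√B, 0]]`: this matrix
has the same nonzero eigenvalues as `Yᴴ Y = [[A + B, 0], [0, 0]]`. -/

open Polynomial

lemma ConcaveOn.sum_le_sum_mulVec {ι : Type*} [Fintype ι] [DecidableEq ι] {s : Set ℝ}
    {g : ℝ → ℝ} (hg : ConcaveOn ℝ s g) {N : Matrix ι ι ℝ} (hN : N ∈ doublyStochastic ℝ ι)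
    {d : ι → ℝ} (hd : ∀ i, d i ∈ s) :
    ∑ i, g (d i) ≤ ∑ i, g ((N *ᵥ d) i) := by
  obtain ⟨hN0, hrow, hcol⟩ := mem_doublyStochastic_iff_sum.mp hN
  calc ∑ j, g (d j) = ∑ i, ∑ j, N i j * g (d j) := by
        rw [Finset.sum_comm]; simp [← Finset.sum_mul, hcol]
    _ ≤ ∑ i, g ((N *ᵥ d) i) := Finset.sum_le_sum fun i _ =>
        hg.le_map_sum (fun j _ => hN0 i j) (hrow i) (fun j _ => hd j)

lemma ConcaveOn.sum_le_card_mul_of_sum_eq {κ : Type*} [Fintype κ] [Nonempty κ] {s : Set ℝ}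
    {g : ℝ → ℝ} (hg : ConcaveOn ℝ s g) {c : κ → ℝ} (hc : ∀ k, c k ∈ s) {t : ℝ}
    (ht : ∑ k, c k = Fintype.card κ * t) :
    ∑ k, g (c k) ≤ Fintype.card κ * g t := by
  have hn : (0 : ℝ) < Fintype.card κ := by exact_mod_cast Fintype.card_pos
  have := hg.le_map_sum (t := Finset.univ) (w := fun _ => (Fintype.card κ : ℝ)⁻¹)
    (fun _ _ => by positivity) (by simp [hn.ne']) (fun k _ => hc k)
  simp only [smul_eq_mul, ← Finset.mul_sum, ht, inv_mul_cancel_left₀ hn.ne'] at this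
  rwa [inv_mul_le_iff₀ hn] at this

namespace Matrix

variable {ι κ : Type*} [Fintype ι] [DecidableEq ι]

lemma IsHermitian.sum_eigenvalues_congr {A B : Matrix ι ι ℂ} (hA : A.IsHermitian)
    (hB : B.IsHermitian) (h : A = B) (g : ℝ → ℝ) :
    ∑ i, g (hA.eigenvalues i) = ∑ i, g (hB.eigenvalues i) := by
  subst h; rfl

lemma IsHermitian.sum_eigenvalues_eq_of_charpoly_eq [Fintype κ] {A : Matrix ι ι ℂ}
    (hA : A.IsHermitian) {d : κ → ℝ} (h : A.charpoly = ∏ k, (X - C (d k : ℂ))) (g : ℝ → ℝ) :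
    ∑ i, g (hA.eigenvalues i) = ∑ k, g (d k) := by
  have hroots := congrArg roots h
  have hprod : ∏ k, (X - C (d k : ℂ))
      = ((Finset.univ.val.map fun k => (d k : ℂ)).map fun c => X - C c).prod := by
    rw [Multiset.map_map]; rfl
  rw [hA.roots_charpoly_eq_eigenvalues, hprod, roots_multiset_prod_X_sub_C] at hroots
  have hsums := congrArg (fun μ => (μ.map (g ∘ Complex.re)).sum) hroots
  simp only [Multiset.map_map] at hsums
  exact hsums

lemma charpoly_unitary_mul_mul_star {U : Matrix ι ι ℂ} (hU : U ∈ unitaryGroup ι ℂ)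
    (D : Matrix ι ι ℂ) : (U * D * star U).charpoly = D.charpoly := by
  rw [charpoly_mul_comm, ← mul_assoc, (mem_unitaryGroup_iff').mp hU, one_mul]

lemma IsHermitian.sum_eigenvalues_smul {A : Matrix ι ι ℂ} (hA : A.IsHermitian) (c : ℝ)
    (hcA : ((c : ℂ) • A).IsHermitian) (g : ℝ → ℝ) :
    ∑ i, g (hcA.eigenvalues i) = ∑ i, g (c * hA.eigenvalues i) := by
  refine hcA.sum_eigenvalues_eq_of_charpoly_eq ?_ g
  have hdiag : (c : ℂ) • diagonal (RCLike.ofReal ∘ hA.eigenvalues)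
      = diagonal (RCLike.ofReal ∘ fun i => c * hA.eigenvalues i : ι → ℂ) := by
    ext i j; by_cases h : i = j <;> simp [h]
  conv_lhs => rw [hA.spectral_theorem, Unitary.conjStarAlgAut_apply, ← smul_mul_assoc,
    ← mul_smul_comm, hdiag, charpoly_unitary_mul_mul_star hA.eigenvectorUnitary.2]
  simp [charpoly_diagonal]

lemma IsHermitian.star_eigenvectorUnitary_mul_mul_eigenvectorUnitary {A : Matrix ι ι ℂ}
    (hA : A.IsHermitian) :
    star (hA.eigenvectorUnitary : Matrix ι ι ℂ) * A * (hA.eigenvectorUnitary : Matrix ι ι ℂ)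
      = diagonal (RCLike.ofReal ∘ hA.eigenvalues) := by
  simpa using hA.conjStarAlgAut_star_eigenvectorUnitary

lemma of_normSq_mem_doublyStochastic {U : Matrix ι ι ℂ} (hU : U ∈ unitaryGroup ι ℂ) :
    of (fun i j => Complex.normSq (U i j)) ∈ doublyStochastic ℝ ι := by
  have hsum : ∀ V ∈ unitaryGroup ι ℂ, ∀ i, ∑ j, Complex.normSq (V i j) = 1 := by
    intro V hV i
    have := congrArg (fun M => (M i i).re) ((mem_unitaryGroup_iff).mp hV)
    simpa [mul_apply, Complex.mul_conj] using this
  refine mem_doublyStochastic_iff_sum.mpr ⟨fun i j => Complex.normSq_nonneg _, hsum U hU,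
    fun j => ?_⟩
  simpa using hsum (star U) (Unitary.star_mem hU) j

lemma re_mul_diagonal_mul_star_apply_self (U : Matrix ι ι ℂ) (d : ι → ℝ) (i : ι) :
    ((U * diagonal (RCLike.ofReal ∘ d : ι → ℂ) * star U) i i).re
      = (of (fun i j => Complex.normSq (U i j)) *ᵥ d) i := by
  rw [mul_apply, Complex.re_sum]
  refine Finset.sum_congr rfl fun j _ => ?_
  rw [mul_diagonal, star_apply, mul_right_comm, RCLike.star_def, Complex.mul_conj]
  simp [mul_comm]

lemma IsHermitian.sum_eigenvalues_le_sum_diag {s : Set ℝ} {g : ℝ → ℝ} (hg : ConcaveOn ℝ s g)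
    {A : Matrix ι ι ℂ} (hA : A.IsHermitian) (hs : ∀ i, hA.eigenvalues i ∈ s)
    {U : Matrix ι ι ℂ} (hU : U ∈ unitaryGroup ι ℂ) :
    ∑ i, g (hA.eigenvalues i) ≤ ∑ i, g ((star U * A * U) i i).re := by
  set V : Matrix ι ι ℂ := ↑hA.eigenvectorUnitary
  have hW : star U * V ∈ unitaryGroup ι ℂ :=
    mul_mem (Unitary.star_mem hU) hA.eigenvectorUnitary.2
  have hconj : star U * A * U
      = star U * V * diagonal (RCLike.ofReal ∘ hA.eigenvalues) * star (star U * V) := by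
    conv_lhs => rw [hA.spectral_theorem, Unitary.conjStarAlgAut_apply]
    simp only [star_mul, star_star, mul_assoc, V]
  simp_rw [hconj, re_mul_diagonal_mul_star_apply_self]
  exact hg.sum_le_sum_mulVec (of_normSq_mem_doublyStochastic hW) hs

lemma PosSemidef.sum_sum_eigenvalues_le [Fintype κ] [Nonempty κ] {g : ℝ → ℝ}
    (hg : ConcaveOn ℝ (Set.Ici 0) g) {H : κ → Matrix ι ι ℂ} (hH : ∀ k, (H k).PosSemidef)
    {M : Matrix ι ι ℂ} (hM : M.PosSemidef) (hsum : ∑ k, H k = (Fintype.card κ : ℂ) • M) :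
    ∑ k, ∑ i, g ((hH k).1.eigenvalues i) ≤ Fintype.card κ * ∑ i, g (hM.1.eigenvalues i) := by
  set V : Matrix ι ι ℂ := ↑hM.1.eigenvectorUnitary
  have hV : V ∈ unitaryGroup ι ℂ := hM.1.eigenvectorUnitary.2
  have hVMV : star V * M * V = diagonal (RCLike.ofReal ∘ hM.1.eigenvalues) :=
    hM.1.star_eigenvectorUnitary_mul_mul_eigenvectorUnitary
  have hdiag : ∀ i, ∑ k, ((star V * H k * V) i i).re = Fintype.card κ * hM.1.eigenvalues i := by
    intro i
    have := congrArg (fun N => (N i i).re) (congrArg (fun N => star V * N * V) hsum)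
    simpa [Finset.mul_sum, Finset.sum_mul, sum_apply, Complex.re_sum, hVMV] using this
  calc ∑ k, ∑ i, g ((hH k).1.eigenvalues i) ≤ ∑ k, ∑ i, g ((star V * H k * V) i i).re :=
        Finset.sum_le_sum fun k _ =>
          (hH k).1.sum_eigenvalues_le_sum_diag hg (hH k).eigenvalues_nonneg hV
    _ = ∑ i, ∑ k, g ((star V * H k * V) i i).re := Finset.sum_comm
    _ ≤ ∑ i, Fintype.card κ * g (hM.1.eigenvalues i) := Finset.sum_le_sum fun i _ =>
        hg.sum_le_card_mul_of_sum_eq (fun k => (Complex.nonneg_iff.mp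
          ((hH k).conjTranspose_mul_mul_same V).diag_nonneg).1) (hdiag i)
    _ = Fintype.card κ * ∑ i, g (hM.1.eigenvalues i) := Finset.mul_sum _ _ _ |>.symm

lemma fromBlocks_mem_unitaryGroup {U V : Matrix ι ι ℂ} (hU : U ∈ unitaryGroup ι ℂ)
    (hV : V ∈ unitaryGroup ι ℂ) : fromBlocks U 0 0 V ∈ unitaryGroup (ι ⊕ ι) ℂ := by
  rw [mem_unitaryGroup_iff, star_eq_conjTranspose, fromBlocks_conjTranspose, fromBlocks_multiply]
  simp [← star_eq_conjTranspose, mem_unitaryGroup_iff.mp hU, mem_unitaryGroup_iff.mp hV]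

lemma sum_eigenvalues_fromBlocks_le {s : Set ℝ} {g : ℝ → ℝ} (hg : ConcaveOn ℝ s g)
    {A B C D : Matrix ι ι ℂ} (hA : A.IsHermitian) (hB : B.IsHermitian)
    (hF : (fromBlocks A C D B).IsHermitian) (hs : ∀ i, hF.eigenvalues i ∈ s) :
    ∑ i, g (hF.eigenvalues i) ≤ ∑ i, g (hA.eigenvalues i) + ∑ i, g (hB.eigenvalues i) := by
  have hU := fromBlocks_mem_unitaryGroup hA.eigenvectorUnitary.2 hB.eigenvectorUnitary.2
  refine (hF.sum_eigenvalues_le_sum_diag hg hs hU).trans_eq ?_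
  rw [star_eq_conjTranspose, fromBlocks_conjTranspose, fromBlocks_multiply, fromBlocks_multiply,
    Fintype.sum_sum_type]
  simp [← star_eq_conjTranspose, hA.star_eigenvectorUnitary_mul_mul_eigenvectorUnitary,
    hB.star_eigenvectorUnitary_mul_mul_eigenvectorUnitary]

open scoped MatrixOrder in
lemma PosSemidef.sum_eigenvalues_add_le {g : ℝ → ℝ} (hg : ConcaveOn ℝ (Set.Ici 0) g)
    (hg0 : g 0 = 0) {A B : Matrix ι ι ℂ} (hA : A.PosSemidef) (hB : B.PosSemidef) :
    ∑ i, g ((hA.add hB).1.eigenvalues i)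
      ≤ ∑ i, g (hA.1.eigenvalues i) + ∑ i, g (hB.1.eigenvalues i) := by
  set a := CFC.sqrt A
  set b := CFC.sqrt B
  have ha : aᴴ = a := (CFC.sqrt_nonneg A).posSemidef.1
  have hb : bᴴ = b := (CFC.sqrt_nonneg B).posSemidef.1
  have haa : a * a = A := CFC.sqrt_mul_sqrt_self A hA.nonneg
  have hbb : b * b = B := CFC.sqrt_mul_sqrt_self B hB.nonneg
  set Y : Matrix (ι ⊕ ι) (ι ⊕ ι) ℂ := fromBlocks a 0 b 0
  have hYY : Yᴴ * Y = fromBlocks (A + B) 0 0 0 := by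
    simp [Y, fromBlocks_conjTranspose, fromBlocks_multiply, ha, hb, haa, hbb]
  have hYY' : Y * Yᴴ = fromBlocks A (a * b) (b * a) B := by
    simp [Y, fromBlocks_conjTranspose, fromBlocks_multiply, ha, hb, haa, hbb]
  have hF : (fromBlocks A (a * b) (b * a) B).PosSemidef :=
    hYY' ▸ posSemidef_self_mul_conjTranspose Y
  have hchar : (fromBlocks A (a * b) (b * a) B).charpoly
      = ∏ i, (X - C ((Sum.elim (hA.add hB).1.eigenvalues (0 : ι → ℝ) i : ℝ) : ℂ)) := by
    rw [← hYY', ← charpoly_mul_comm, hYY, charpoly_fromBlocks_zero₂₁, charpoly_zero,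
      (hA.add hB).1.charpoly_eq, Fintype.prod_sum_type]
    simp
  calc ∑ i, g ((hA.add hB).1.eigenvalues i) = ∑ i, g (hF.1.eigenvalues i) := by
        rw [hF.1.sum_eigenvalues_eq_of_charpoly_eq hchar, Fintype.sum_sum_type]
        simp [hg0]
    _ ≤ _ := sum_eigenvalues_fromBlocks_le hg hA.1 hB.1 hF.1 hF.eigenvalues_nonneg

lemma PosSemidef.sum_eigenvalues_sum_le {g : ℝ → ℝ} (hg : ConcaveOn ℝ (Set.Ici 0) g)
    (hg0 : g 0 = 0) {H : κ → Matrix ι ι ℂ} (hH : ∀ k, (H k).PosSemidef) (s : Finset κ) :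
    ∑ i, g ((posSemidef_sum s fun k _ => hH k).1.eigenvalues i)
      ≤ ∑ k ∈ s, ∑ i, g ((hH k).1.eigenvalues i) := by
  classical
  induction s using Finset.cons_induction with
  | empty =>
    have h0 : (0 : Matrix ι ι ℂ).IsHermitian := isHermitian_zero
    rw [IsHermitian.sum_eigenvalues_congr _ h0 Finset.sum_empty,
      (h0.eigenvalues_eq_zero_iff).mpr rfl]
    simp [hg0]
  | cons k s hk ih =>
    have hs := posSemidef_sum s fun k _ => hH k
    rw [IsHermitian.sum_eigenvalues_congr _ ((hH k).add hs).1 (Finset.sum_cons hk),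
      Finset.sum_cons]
    exact ((hH k).sum_eigenvalues_add_le hg hg0 hs).trans (add_le_add le_rfl ih)

lemma sum_conjTranspose_mul_self_sum_smul {l m : Type*} [Fintype κ] [Fintype l]
    {a : Matrix κ ι ℂ} {c : ℂ} (ha : aᴴ * a = c • 1) (x : ι → Matrix l m ℂ) :
    ∑ k, (∑ j, a k j • x j)ᴴ * ∑ j, a k j • x j = c • ∑ j, (x j)ᴴ * x j := by
  have hexp : ∀ k, (∑ j, a k j • x j)ᴴ * ∑ j, a k j • x j
      = ∑ j, ∑ j', (star (a k j) * a k j') • ((x j)ᴴ * x j') := by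
    intro k
    simp only [conjTranspose_sum, conjTranspose_smul, Matrix.sum_mul, Matrix.mul_sum,
      Matrix.smul_mul, Matrix.mul_smul, Finset.smul_sum, smul_smul]
    rw [Finset.sum_comm]
    simp only [mul_comm (a k _)]
  have hortho : ∀ j j', ∑ k, star (a k j) * a k j' = if j = j' then c else 0 := by
    intro j j'
    simpa [mul_apply, one_apply] using congrFun (congrFun ha j) j'
  simp only [hexp]
  rw [Finset.sum_comm]
  simp_rw [Finset.sum_comm (s := Finset.univ (α := κ)), ← Finset.sum_smul, hortho, ite_smul,
    zero_smul, Finset.sum_ite_eq, Finset.mem_univ, if_true, Finset.smul_sum]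

end Matrix

lemma IsPrimitiveRoot.conjTranspose_mul_self_pow {n : ℕ} {ζ : ℂ} (hζ : IsPrimitiveRoot ζ n)
    {ω : Fin n → ℂ} (hω : ∀ j, ω j = ζ ^ (j : ℕ)) :
    (of fun k j : Fin n => ω j ^ (k : ℕ))ᴴ * of (fun k j : Fin n => ω j ^ (k : ℕ))
      = (n : ℂ) • 1 := by
  ext j l
  have hn : n ≠ 0 := (Fin.pos j).ne'
  have hnorm : star (ω j) * ω j = 1 := by
    rw [hω, RCLike.star_def, Complex.conj_mul', norm_pow, hζ.norm'_eq_one hn]; simp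
  set μ := star (ω j) * ω l
  have hsum : ∑ k : Fin n, star (ω j ^ (k : ℕ)) * ω l ^ (k : ℕ) = ∑ k ∈ Finset.range n, μ ^ k := by
    rw [← Fin.sum_univ_eq_sum_range]
    simp [μ, mul_pow]
  simp only [mul_apply, conjTranspose_apply, of_apply, Matrix.smul_apply, Matrix.one_apply, hsum]
  split_ifs with hjl
  · subst hjl; simp [μ, hnorm]
  · have hμn : μ ^ n = 1 := by
      rw [mul_pow, ← star_pow, hω, hω, ← pow_mul, ← pow_mul, mul_comm (j : ℕ), mul_comm (l : ℕ),
        pow_mul, pow_mul, hζ.pow_eq_one]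
      simp
    have hμ1 : μ ≠ 1 := by
      intro h
      have : ω j = ω l := by rw [← mul_one (ω j), ← h, ← mul_assoc, mul_comm (ω j), hnorm, one_mul]
      rw [hω, hω] at this
      exact hjl (Fin.ext (hζ.pow_inj j.isLt l.isLt this))
    simp [geom_sum_eq hμ1, hμn]

/-- Refined Clarkson inequalities for `0 < p ≤ 2`:
`(1/n) ∑ₖ ‖∑ⱼ ωⱼᵏ xⱼ‖ₚᵖ ≤ ‖(∑ⱼ xⱼᴴxⱼ)^{1/2}‖ₚᵖ ≤ n^{-p/2} ∑ₖ ‖∑ⱼ ωⱼᵏ xⱼ‖ₚᵖ`. -/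
theorem refined_clarkson_le_two {m : ℕ} (n : ℕ) (hn : 0 < n)
    (x : Fin n → Matrix (Fin m) (Fin m) ℂ) (ω : Fin n → ℂ)
    (hω : ∀ j : Fin n, ω j = Complex.exp (2 * Real.pi * Complex.I * j / n))
    (p : ℝ) (hp0 : 0 < p) (hp2 : p ≤ 2) :
    (1 / (n : ℝ)) * ∑ k : Fin n, schatten p (∑ j, ω j ^ (k : ℕ) • x j)
        ≤ traceRpow (p / 2) (∑ j, (x j)ᴴ * x j)
            (hermSum _ fun j => Matrix.isHermitian_conjTranspose_mul_self (x j)) ∧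
    traceRpow (p / 2) (∑ j, (x j)ᴴ * x j)
        (hermSum _ fun j => Matrix.isHermitian_conjTranspose_mul_self (x j))
      ≤ (n : ℝ) ^ (-(p / 2)) * ∑ k : Fin n, schatten p (∑ j, ω j ^ (k : ℕ) • x j) := by
  set A : Fin n → Matrix (Fin m) (Fin m) ℂ := fun k => ∑ j, ω j ^ (k : ℕ) • x j
  set S := ∑ j, (x j)ᴴ * x j
  have hA : ∀ k, ((A k)ᴴ * A k).PosSemidef := fun k => posSemidef_conjTranspose_mul_self _
  have hS : S.PosSemidef := posSemidef_sum _ fun j _ => posSemidef_conjTranspose_mul_self (x j)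
  have hg : ConcaveOn ℝ (Set.Ici 0) fun t : ℝ => t ^ (p / 2) :=
    Real.concaveOn_rpow (by positivity) (by linarith)
  have hζ := Complex.isPrimitiveRoot_exp n hn.ne'
  have hgram : ∑ k, (A k)ᴴ * A k = (n : ℂ) • S := by
    refine sum_conjTranspose_mul_self_sum_smul (hζ.conjTranspose_mul_self_pow fun j => ?_) x
    rw [hω, ← Complex.exp_nat_mul]
    ring_nf
  have hnR : (0 : ℝ) < n := by exact_mod_cast hn
  have : Nonempty (Fin n) := ⟨⟨0, hn⟩⟩
  change (1 / (n : ℝ)) * ∑ k, ∑ i, ((hA k).1.eigenvalues i) ^ (p / 2)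
      ≤ ∑ i, (hS.1.eigenvalues i) ^ (p / 2) ∧
    ∑ i, (hS.1.eigenvalues i) ^ (p / 2)
      ≤ (n : ℝ) ^ (-(p / 2)) * ∑ k, ∑ i, ((hA k).1.eigenvalues i) ^ (p / 2)
  constructor
  · rw [one_div, inv_mul_le_iff₀ hnR]
    simpa using PosSemidef.sum_sum_eigenvalues_le hg hA hS (by simpa using hgram)
  · have hrot := PosSemidef.sum_eigenvalues_sum_le hg (Real.zero_rpow (by positivity)) hA .univ
    have hnS : ((n : ℂ) • S).IsHermitian := hgram ▸ (posSemidef_sum _ fun k _ => hA k).1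
    rw [IsHermitian.sum_eigenvalues_congr _ hnS hgram (· ^ (p / 2)),
      hS.1.sum_eigenvalues_smul n hnS (· ^ (p / 2))] at hrot
    simp_rw [Real.mul_rpow hnR.le (hS.eigenvalues_nonneg _), ← Finset.mul_sum] at hrot
    rw [Real.rpow_neg hnR.le, ← div_eq_inv_mul, le_div_iff₀' (by positivity)]
    exact hrot
end

section
/- Let f : ℝ≥0 → ℝ≥0 be defined by f(t) = e^{t} − 1, which is continuous, increasing, convex, and satisfies f(0) = 0. For positive semidefinite n×n complex matrices x and y and α ∈ (0,1): trace(exp(αx + (1−α)y) − I) ≤ α·trace(exp(x) − I) + (1−α)·trace(exp(y) − I), where exp is the matrix exponential and I the identity matrix. -/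
/-! Diagonalize `z = α x + (1 - α) y` in an orthonormal eigenbasis `(uᵢ)`. Then
`tr f(z) = ∑ᵢ f ⟪uᵢ, z uᵢ⟫`, and each `⟪uᵢ, z uᵢ⟫` is the convex combination of `⟪uᵢ, x uᵢ⟫` and
`⟪uᵢ, y uᵢ⟫`, so convexity of `f` reduces the claim to `f ⟪u, a u⟫ ≤ ⟪u, f(a) u⟫` for Hermitian `a`
and unit `u`. That is Jensen's inequality for the probability weights `|⟪vⱼ, u⟫|²` on the
eigenvalues of `a`, where `(vⱼ)` is an eigenbasis of `a`; summing over `i` recovers the traces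
of `f(x)` and `f(y)`. For `f t = eᵗ - 1` the functional calculus gives `exp a - 1`. -/

open Matrix
open scoped ComplexOrder InnerProductSpace

namespace Matrix

variable {n 𝕜 : Type*} [RCLike 𝕜] [Fintype n] [DecidableEq n]

theorem trace_eq_sum_inner (M : Matrix n n 𝕜) (b : OrthonormalBasis n 𝕜 (EuclideanSpace 𝕜 n)) :
    M.trace = ∑ i, ⟪b i, toEuclideanLin M (b i)⟫_𝕜 := by
  rw [← LinearMap.trace_eq_sum_inner,
    LinearMap.trace_eq_matrix_trace 𝕜 (EuclideanSpace.basisFun n 𝕜).toBasis]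
  congr
  ext i j
  simp [LinearMap.toMatrix_apply]

namespace IsHermitian

variable {A : Matrix n n 𝕜} (hA : A.IsHermitian)
include hA

theorem toEuclideanLin_cfc_eigenvectorBasis (f : ℝ → ℝ) (j : n) :
    toEuclideanLin (cfc f A) (hA.eigenvectorBasis j) =
      (f (hA.eigenvalues j) : 𝕜) • hA.eigenvectorBasis j := by
  ext1
  rw [toLpLin_apply, hA.cfc_eq, IsHermitian.cfc, Unitary.conjStarAlgAut_apply,
    ← mulVec_mulVec, ← mulVec_mulVec, star_eigenvectorUnitary_mulVec, diagonal_mulVec_single,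
    mul_one, Function.comp_apply, Function.comp_apply, WithLp.ofLp_smul,
    ← eigenvectorUnitary_mulVec, ← mulVec_smul, ← Pi.single_smul, smul_eq_mul, mul_one]

theorem inner_eigenvectorBasis_cfc (f : ℝ → ℝ) (i : n) :
    ⟪hA.eigenvectorBasis i, toEuclideanLin (cfc f A) (hA.eigenvectorBasis i)⟫_𝕜 =
      f (hA.eigenvalues i) := by
  rw [hA.toEuclideanLin_cfc_eigenvectorBasis, inner_smul_right,
    inner_self_eq_one_of_norm_eq_one (hA.eigenvectorBasis.orthonormal.1 i), mul_one]

theorem eigenvalues_eq_re_inner (i : n) : hA.eigenvalues i =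
    RCLike.re ⟪hA.eigenvectorBasis i, toEuclideanLin A (hA.eigenvectorBasis i)⟫_𝕜 := by
  rw [hA.eigenvalues_eq, dotProduct_comm]
  rfl

theorem trace_cfc_s16 (f : ℝ → ℝ) : (cfc f A).trace = ∑ i, (f (hA.eigenvalues i) : 𝕜) := by
  simp only [trace_eq_sum_inner _ hA.eigenvectorBasis, hA.inner_eigenvectorBasis_cfc]

theorem re_inner_cfc (f : ℝ → ℝ) (v : EuclideanSpace 𝕜 n) :
    RCLike.re ⟪v, toEuclideanLin (cfc f A) v⟫_𝕜 =
      ∑ j, f (hA.eigenvalues j) * ‖⟪hA.eigenvectorBasis j, v⟫_𝕜‖ ^ 2 := by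
  have hsymm := isSymmetric_toEuclideanLin_iff.2 (cfc_predicate f A : IsSelfAdjoint (cfc f A))
  rw [← hA.eigenvectorBasis.sum_inner_mul_inner, map_sum]
  refine Finset.sum_congr rfl fun j _ => ?_
  rw [← hsymm, hA.toEuclideanLin_cfc_eigenvectorBasis, inner_smul_left, RCLike.conj_ofReal,
    mul_left_comm, ← inner_conj_symm, RCLike.conj_mul, ← RCLike.ofReal_pow, ← RCLike.ofReal_mul,
    RCLike.ofReal_re]

theorem map_re_inner_le_re_inner_cfc {f : ℝ → ℝ} (hf : ConvexOn ℝ Set.univ f)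
    {v : EuclideanSpace 𝕜 n} (hv : ‖v‖ = 1) :
    f (RCLike.re ⟪v, toEuclideanLin A v⟫_𝕜) ≤ RCLike.re ⟪v, toEuclideanLin (cfc f A) v⟫_𝕜 := by
  have hw : ∑ j, ‖⟪hA.eigenvectorBasis j, v⟫_𝕜‖ ^ 2 = 1 := by
    rw [hA.eigenvectorBasis.sum_sq_norm_inner_right, hv, one_pow]
  have := hf.map_sum_le (t := Finset.univ) (fun j _ => sq_nonneg _) hw
    (p := hA.eigenvalues) (fun j _ => Set.mem_univ _)
  conv_lhs => rw [← cfc_id' ℝ A, hA.re_inner_cfc]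
  rw [hA.re_inner_cfc]
  simpa only [smul_eq_mul, mul_comm] using this

end IsHermitian

theorem convexOn_re_trace_cfc {f : ℝ → ℝ} (hf : ConvexOn ℝ Set.univ f) :
    ConvexOn ℝ {A : Matrix n n 𝕜 | A.IsHermitian} (fun A => RCLike.re (cfc f A).trace) := by
  have hconv : Convex ℝ {A : Matrix n n 𝕜 | A.IsHermitian} := (selfAdjoint.submodule ℝ _).convex
  refine ⟨hconv, fun x hx y hy a b ha hb hab => ?_⟩
  have hz : (a • x + b • y).IsHermitian := hconv hx hy ha hb hab
  set e := hz.eigenvectorBasis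
  have hlin (v : EuclideanSpace 𝕜 n) : RCLike.re ⟪v, toEuclideanLin (a • x + b • y) v⟫_𝕜 =
      a * RCLike.re ⟪v, toEuclideanLin x v⟫_𝕜 + b * RCLike.re ⟪v, toEuclideanLin y v⟫_𝕜 := by
    simp only [RCLike.real_smul_eq_coe_smul (K := 𝕜), map_add, map_smul, LinearMap.add_apply,
      LinearMap.smul_apply, inner_add_right, inner_smul_right, RCLike.re_ofReal_mul]
  have he (i : n) : ‖e i‖ = 1 := e.orthonormal.1 i
  simp only [smul_eq_mul, hz.trace_cfc_s16, map_sum, RCLike.ofReal_re,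
    trace_eq_sum_inner (cfc f x) e, trace_eq_sum_inner (cfc f y) e, Finset.mul_sum,
    ← Finset.sum_add_distrib]
  refine Finset.sum_le_sum fun i _ => ?_
  calc f (hz.eigenvalues i)
      ≤ a * f (RCLike.re ⟪e i, toEuclideanLin x (e i)⟫_𝕜) +
          b * f (RCLike.re ⟪e i, toEuclideanLin y (e i)⟫_𝕜) := by
        rw [hz.eigenvalues_eq_re_inner, hlin]; exact hf.2 trivial trivial ha hb hab
    _ ≤ _ := by
        gcongr
        · exact hx.map_re_inner_le_re_inner_cfc hf (he i)
        · exact hy.map_re_inner_le_re_inner_cfc hf (he i)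

-- `NormedSpace.exp` depends only on the topology; the L2 operator norm is the matrix norm under
-- which `CFC.real_exp_eq_normedSpace_exp` finds the functional calculus of Hermitian matrices.
open scoped Matrix.Norms.L2Operator in
theorem IsHermitian.exp_sub_one_eq_cfc {A : Matrix n n ℂ} (hA : A.IsHermitian) :
    NormedSpace.exp A - 1 = cfc (fun t => Real.exp t - 1) A := by
  rw [cfc_sub .., cfc_const_one .., CFC.real_exp_eq_normedSpace_exp hA.isSelfAdjoint]

end Matrix

/-- Trace convexity for `f t = eᵗ - 1`: for positive semidefinite `x, y` and `α ∈ (0,1)`,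
`trace (exp(αx + (1-α)y) - I) ≤ α trace (exp x - I) + (1-α) trace (exp y - I)`. -/
theorem trace_exp_convexity {n : ℕ} (x y : Matrix (Fin n) (Fin n) ℂ)
    (hx : x.PosSemidef) (hy : y.PosSemidef) (α : ℝ) (hα : α ∈ Set.Ioo (0 : ℝ) 1) :
    (Matrix.trace (NormedSpace.exp (α • x + (1 - α) • y) - 1)).re
      ≤ α * (Matrix.trace (NormedSpace.exp x - 1)).re
        + (1 - α) * (Matrix.trace (NormedSpace.exp y - 1)).re := by
  have hz : (α • x + (1 - α) • y).IsHermitian := (hx.1.smul (.all α)).add (hy.1.smul (.all _))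
  have hf : ConvexOn ℝ Set.univ (fun t => Real.exp t - 1) := convexOn_exp.add_const (-1)
  rw [hz.exp_sub_one_eq_cfc, hx.1.exp_sub_one_eq_cfc, hy.1.exp_sub_one_eq_cfc]
  exact (convexOn_re_trace_cfc hf).2 hx.1 hy.1 hα.1.le (sub_nonneg.2 hα.2.le) (add_sub_cancel α 1)
end

section
/- For positive semidefinite n×n complex matrices x and y, trace(log(x + y + I)) ≤ trace(log(x + I)) + trace(log(y + I)), where I is the identity matrix and log is applied via the functional calculus. -/
/-! Writing `r = √y`, the Weinstein–Aronszajn identity `det (1 + AB) = det (1 + BA)` gives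
`det (1 + x + y) = det (1 + x) * det (1 + r (1 + x)⁻¹ r)`. Since `(1 + x)⁻¹ ≤ 1` in the Loewner
order, `r (1 + x)⁻¹ r + 1 ≤ r r + 1 = y + 1`, and the determinant is monotone on positive definite
matrices (by the same identity), so `det (1 + x + y) ≤ det (1 + x) * det (1 + y)`. The claim is
the logarithm of this, as `det (a + 1) = ∏ᵢ (λᵢ + 1)`. -/

open Matrix
open scoped NNReal ComplexOrder

/-- `traceLogOneAdd a ha = trace (log (a + I)) = ∑ᵢ log (λᵢ + 1)` for a Hermitian `a`. -/
noncomputable def traceLogOneAdd {n : ℕ} (a : Matrix (Fin n) (Fin n) ℂ)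
    (ha : a.IsHermitian) : ℝ := ∑ i, Real.log (ha.eigenvalues i + 1)

open scoped MatrixOrder

namespace Matrix

variable {n 𝕜 : Type*} [Fintype n] [DecidableEq n] [RCLike 𝕜]

theorem IsHermitian.det_add_one {a : Matrix n n 𝕜} (ha : a.IsHermitian) :
    (a + 1).det = ∏ i, ((ha.eigenvalues i + 1 : ℝ) : 𝕜) := by
  have h : a + 1 = cfc (· + 1 : ℝ → ℝ) a := by
    rw [cfc_add_const .., cfc_id' ℝ a, Algebra.algebraMap_eq_smul_one, one_smul]
  rw [h, ha.cfc_eq, IsHermitian.cfc]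
  simp [-Unitary.conjStarAlgAut_apply]

theorem PosSemidef.one_le_det_add_one {a : Matrix n n 𝕜} (ha : a.PosSemidef) :
    1 ≤ (a + 1).det := by
  rw [ha.1.det_add_one, ← RCLike.ofReal_prod, ← RCLike.ofReal_one, RCLike.ofReal_le_ofReal]
  exact Finset.one_le_prod fun i _ ↦ le_add_of_nonneg_left (ha.eigenvalues_nonneg i)

theorem PosDef.det_add {a c : Matrix n n 𝕜} (ha : a.PosDef) (hc : c.PosSemidef) :
    (a + c).det = a.det * (CFC.sqrt c * a⁻¹ * CFC.sqrt c + 1).det := by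
  have hsq : CFC.sqrt c * CFC.sqrt c = c := CFC.sqrt_mul_sqrt_self c hc.nonneg
  calc (a + c).det = (a * (a⁻¹ * CFC.sqrt c * CFC.sqrt c + 1)).det := by
        rw [mul_add, mul_one, ← mul_assoc, ← mul_assoc,
          mul_nonsing_inv a (isUnit_iff_ne_zero.mpr ha.det_pos.ne'), one_mul, hsq, add_comm]
    _ = a.det * (CFC.sqrt c * a⁻¹ * CFC.sqrt c + 1).det := by
        rw [det_mul, det_mul_add_one_comm, mul_assoc]

theorem PosDef.det_le_det_of_le {a b : Matrix n n 𝕜} (ha : a.PosDef) (hab : a ≤ b) :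
    a.det ≤ b.det := by
  have hc : (b - a).PosSemidef := hab
  have hw : (CFC.sqrt (b - a) * a⁻¹ * CFC.sqrt (b - a)).PosSemidef :=
    (conjugate_nonneg_of_nonneg ha.inv.posSemidef.nonneg (CFC.sqrt_nonneg (b - a))).posSemidef
  calc a.det ≤ a.det * (CFC.sqrt (b - a) * a⁻¹ * CFC.sqrt (b - a) + 1).det :=
        le_mul_of_one_le_right ha.posSemidef.det_nonneg hw.one_le_det_add_one
    _ = b.det := by rw [← ha.det_add hc, add_sub_cancel]

open scoped Norms.L2Operator in
theorem PosSemidef.inv_add_one_le_one {x : Matrix n n ℂ} (hx : x.PosSemidef) :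
    (x + 1)⁻¹ ≤ 1 := by
  have hle : (1 : Matrix n n ℂ) ≤ x + 1 := by simpa [le_iff] using hx
  lift x + 1 to (Matrix n n ℂ)ˣ using (PosDef.posSemidef_add hx PosDef.one).isUnit with u
  rw [← coe_units_inv]
  exact CStarAlgebra.inv_le_one (a := u) hle

theorem PosSemidef.det_add_add_one_le {x y : Matrix n n ℂ} (hx : x.PosSemidef)
    (hy : y.PosSemidef) : (x + y + 1).det ≤ (x + 1).det * (y + 1).det := by
  set r := CFC.sqrt y
  have hr : 0 ≤ r := CFC.sqrt_nonneg y
  have hx1 : (x + 1).PosDef := PosDef.posSemidef_add hx PosDef.one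
  have hw : (r * (x + 1)⁻¹ * r + 1).PosDef :=
    PosDef.posSemidef_add (conjugate_nonneg_of_nonneg hx1.inv.posSemidef.nonneg hr).posSemidef
      PosDef.one
  have hwy : r * (x + 1)⁻¹ * r + 1 ≤ y + 1 := by
    grw [conjugate_le_conjugate_of_nonneg hx.inv_add_one_le_one hr, mul_one,
      CFC.sqrt_mul_sqrt_self y hy.nonneg]
  calc (x + y + 1).det = (x + 1).det * (r * (x + 1)⁻¹ * r + 1).det := by
        rw [add_right_comm, hx1.det_add hy]
    _ ≤ (x + 1).det * (y + 1).det :=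
        mul_le_mul_of_nonneg_left (hw.det_le_det_of_le hwy) hx1.posSemidef.det_nonneg

theorem PosSemidef.exp_traceLogOneAdd {m : ℕ} {a : Matrix (Fin m) (Fin m) ℂ}
    (ha : a.PosSemidef) : (Real.exp (traceLogOneAdd a ha.1) : ℂ) = (a + 1).det := by
  rw [traceLogOneAdd, Real.exp_sum, ha.1.det_add_one, Complex.ofReal_prod]
  exact Finset.prod_congr rfl fun i _ ↦
    congrArg _ (Real.exp_log (by linarith [ha.eigenvalues_nonneg i]))

end Matrix

/-- For positive semidefinite `x, y`,
`trace (log (x + y + I)) ≤ trace (log (x + I)) + trace (log (y + I))`. -/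
theorem trace_log_subadditive {n : ℕ} (x y : Matrix (Fin n) (Fin n) ℂ)
    (hx : x.PosSemidef) (hy : y.PosSemidef) :
    traceLogOneAdd (x + y) (hx.1.add hy.1)
      ≤ traceLogOneAdd x hx.1 + traceLogOneAdd y hy.1 := by
  rw [← Real.exp_le_exp, Real.exp_add, ← Complex.real_le_real, Complex.ofReal_mul,
    (hx.add hy).exp_traceLogOneAdd, hx.exp_traceLogOneAdd, hy.exp_traceLogOneAdd]
  exact hx.det_add_add_one_le hy
end
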